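/- arXiv:2012.13732 — 4 statements merged into one kernel-verified Lean document; each statement's English description precedes it below -/
import Mathlib

section
/- Let I ⊆ R be a nonzero, proper S_n-invariant monomial ideal and let ρ = (∞^{p_0},d_1^{p_1},…,d_s^{p_s}) ∈ Λ*_max(I) with ∞ > d_1 > ⋯ > d_s ≥ 0. Set c = (p_1−1,…,p_s−1). Then Γ^{ρ̃,c}(I) = {∅}, the simplicial complex on [s] whose only face is the empty face. -/
open scoped BigOperators

noncomputable section
open Classical

/-! ## Generic (labeled) simplicial chain complexes and reduced homology over a field -/

section Homology

variable (K : Type) [Field K] {α : Type}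

/-- Index type for chains: elements of `S` whose face (second component) has `j` elements. -/
def ChainIdx (S : Set (α × Finset ℕ)) (j : ℕ) : Type :=
  {q : α × Finset ℕ // q ∈ S ∧ q.2.card = j}

/-- The boundary of a basis element, with the usual simplicial signs. -/
noncomputable def bdElt (S : Set (α × Finset ℕ)) (j : ℕ) (q : ChainIdx S (j + 1)) :
    ChainIdx S j →₀ K :=
  ∑ v ∈ q.1.2,
    if h : (q.1.1, q.1.2.erase v) ∈ S ∧ (q.1.2.erase v).card = j then
      ((-1 : K) ^ (q.1.2.filter (fun u => u ≤ v)).card) •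
        Finsupp.single (⟨(q.1.1, q.1.2.erase v), h⟩ : ChainIdx S j) (1 : K)
    else 0

/-- The simplicial boundary map. -/
noncomputable def bd (S : Set (α × Finset ℕ)) (j : ℕ) :
    (ChainIdx S (j + 1) →₀ K) →ₗ[K] (ChainIdx S j →₀ K) :=
  Finsupp.linearCombination K (bdElt K S j)

/-- Cycles in homological degree `j` (chains are indexed by the cardinality of faces;
degree `j` corresponds to reduced topological degree `j - 1`). -/
noncomputable def cycles (S : Set (α × Finset ℕ)) : (j : ℕ) → Submodule K (ChainIdx S j →₀ K)
  | 0 => ⊤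
  | (i + 1) => LinearMap.ker (bd K S i)

/-- `rhd K S j` is the dimension of the reduced homology group `H̃_{j-1}` of the complex `S`
(the chain groups being finite dimensional, this is `dim` cycles `- dim` boundaries). -/
noncomputable def rhd (S : Set (α × Finset ℕ)) (j : ℕ) : ℕ :=
  Module.finrank K (cycles K S j) -
    Module.finrank K (LinearMap.range (bd K S j) ⊓ cycles K S j : Submodule K _)

/-- `hdim K S j = dim_K H̃_j(S; K)`, for `j : ℤ` (zero for `j ≤ -2`). -/
noncomputable def hdim (S : Set (α × Finset ℕ)) (j : ℤ) : ℕ :=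
  if 0 ≤ j + 1 then rhd K S (j + 1).toNat else 0

/-- View an unlabeled collection of faces as a labeled one (labels in `Unit`). -/
def lab (Δ : Set (Finset ℕ)) : Set (Unit × Finset ℕ) := {q | q.2 ∈ Δ}

/-- Dimension of reduced homology `H̃_{j-1}(Δ; K)` of a collection `Δ` of finite sets. -/
noncomputable def rhd0 (Δ : Set (Finset ℕ)) (j : ℕ) : ℕ := rhd K (lab Δ) j

/-- Dimension of reduced homology `H̃_j(Δ; K)`, `j : ℤ`. -/
noncomputable def hdim0 (Δ : Set (Finset ℕ)) (j : ℤ) : ℕ := hdim K (lab Δ) j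

end Homology

/-! ## Monomial ideals in `k[x_1, …, x_n]`, invariant under the symmetric group -/

section Poly

variable (K : Type) [Field K] (n : ℕ)

/-- The monomial `x^a` in `k[x_1, …, x_n]`. -/
noncomputable def mon (a : Fin n → ℕ) : MvPolynomial (Fin n) K :=
  MvPolynomial.monomial (Finsupp.equivFunOnFinite.symm a) 1

/-- A monomial ideal: an ideal generated by a set of monomials. -/
def IsMonomialIdeal (I : Ideal (MvPolynomial (Fin n) K)) : Prop :=
  ∃ S : Set (Fin n → ℕ), I = Ideal.span (mon K n '' S)

/-- `I` is invariant under the action of `S_n` permuting the variables. -/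
def IsSymmetricIdeal (I : Ideal (MvPolynomial (Fin n) K)) : Prop :=
  ∀ σ : Equiv.Perm (Fin n), Ideal.map (MvPolynomial.rename σ).toRingHom I = I

end Poly

/-! ## Partitions given by blocks `(d_1^{p_1}, …, d_s^{p_s}, 0^{p_{s+1}})` -/

section Blocks

/-- `cumsum p k = p 0 + ⋯ + p (k-1)`. -/
def cumsum (p : ℕ → ℕ) (k : ℕ) : ℕ := ∑ j ∈ Finset.range k, p j

/-- The index of the block (among blocks `0, …, s`) containing position `i`,
for blocks of sizes `p 0, …, p (s-1)` followed by a final block. -/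
def blkOf (p : ℕ → ℕ) (s i : ℕ) : ℕ :=
  ((Finset.range s).filter fun k => cumsum p (k + 1) ≤ i).card

/-- The partition `μ = (d_0^{p_0}, …, d_{s-1}^{p_{s-1}}, 0^{p_s})` (0-indexed blocks),
as a function of the position `i ∈ {0, …, n-1}` where `n = cumsum p (s+1)`. -/
def muOf (s : ℕ) (d p : ℕ → ℕ) (i : ℕ) : ℕ :=
  if blkOf p s i < s then d (blkOf p s i) else 0

/-- The partition `μ ∖ c`, obtained from `μ` by replacing, for each `k`, the last `c k` of
the parts equal to `d k` by `d k - 1`. -/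
def muMinus (s : ℕ) (d p c : ℕ → ℕ) (i : ℕ) : ℕ :=
  if blkOf p s i < s then
    (if p (blkOf p s i) - c (blkOf p s i) ≤ i - cumsum p (blkOf p s i) then
      d (blkOf p s i) - 1 else d (blkOf p s i))
  else 0

/-- Indicator vector of a finite set `F`. -/
def eF (F : Finset ℕ) (j : ℕ) : ℕ := if j ∈ F then 1 else 0

end Blocks

/-! ## The simplicial complexes `Δ^{μ,c}(I)` and `Γ^{μ,c}(I)` -/

section Complexes

variable (K : Type) [Field K] (n : ℕ)

/-- The simplicial complex `Δ^{μ,c}(I) = {F ⊆ [s] : μ ∖ (c + e_F) ∈ P(I)}` (vertices are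
`0, …, s-1`), for `μ = (d_0^{p_0}, …, d_{s-1}^{p_{s-1}}, 0^{p_s})` and `c ≤ p(μ)`. -/
def DeltaCx (I : Ideal (MvPolynomial (Fin n) K)) (s : ℕ) (d p c : ℕ → ℕ) :
    Set (Finset ℕ) :=
  {F | F ⊆ Finset.range s ∧
    mon K n (fun i => muMinus s d p (fun j => c j + eF F j) i.val) ∈ I}

/-- The Alexander dual complex `Γ^{μ,c}(I) = {F ⊆ [s] : μ ∖ (c + e_{[s]∖F}) ∈ O(I)}`. -/
def GammaCx (I : Ideal (MvPolynomial (Fin n) K)) (s : ℕ) (d p c : ℕ → ℕ) :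
    Set (Finset ℕ) :=
  {F | F ⊆ Finset.range s ∧
    mon K n (fun i => muMinus s d p
      (fun j => c j + (if j < s ∧ j ∉ F then 1 else 0)) i.val) ∉ I}

/-- `γ_i^{μ,c}(I) = dim_K H̃_{i-1}(Δ^{μ,c}(I); K)`. -/
noncomputable def gammaDim (I : Ideal (MvPolynomial (Fin n) K)) (s : ℕ) (d p c : ℕ → ℕ)
    (i : ℕ) : ℕ :=
  rhd0 K (DeltaCx K n I s d p c) i

end Complexes

/-! ## Multigraded Tor via the Koszul complex

For a monomial ideal `I`, the multidegree-`a` strand of the Koszul complex `K_•(I)` is the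
(shifted) reduced chain complex of the simplicial complex
`Δ_a^I = {F ⊆ [n] : a - e_F ≥ 0, x^{a - e_F} ∈ I}`, so that
`dim_K Tor_i(I, K)_a = dim_K H̃_{i-1}(Δ_a^I; K)`, and similarly for `R/I` with the
condition `x^{a-e_F} ∉ I`. -/

section Tor

variable (K : Type) [Field K] (n : ℕ)

/-- The Koszul simplicial complex of the ideal `I` in multidegree `a`. -/
def KosI (I : Ideal (MvPolynomial (Fin n) K)) (a : Fin n → ℕ) : Set (Finset ℕ) :=
  {F | F ⊆ Finset.range n ∧ (∀ i : Fin n, (i : ℕ) ∈ F → 1 ≤ a i) ∧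
    mon K n (fun i => a i - eF F i.val) ∈ I}

/-- The Koszul complex of `R/I` in multidegree `a`. -/
def KosQ (I : Ideal (MvPolynomial (Fin n) K)) (a : Fin n → ℕ) : Set (Finset ℕ) :=
  {F | F ⊆ Finset.range n ∧ (∀ i : Fin n, (i : ℕ) ∈ F → 1 ≤ a i) ∧
    mon K n (fun i => a i - eF F i.val) ∉ I}

/-- `dim_K Tor_i(I, K)_a`, for a monomial ideal `I` and a multidegree `a ∈ ℤ^n`
(components with a negative coordinate vanish, so only `a ∈ ℕ^n` is needed). -/
noncomputable def torDim (I : Ideal (MvPolynomial (Fin n) K)) (i : ℕ) (a : Fin n → ℕ) : ℕ :=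
  rhd0 K (KosI K n I a) i

/-- `dim_K Tor_i(R/I, K)_a` for a monomial ideal `I`. -/
noncomputable def torQDim (I : Ideal (MvPolynomial (Fin n) K)) (i : ℕ) (a : Fin n → ℕ) : ℕ :=
  rhd0 K (KosQ K n I a) i

/-- `dim_K Tor_i(I, K)_{⟨μ⟩}`: the sum of `dim_K Tor_i(I, K)_a` over all rearrangements `a`
of the partition `μ`. -/
noncomputable def torDimSym (I : Ideal (MvPolynomial (Fin n) K)) (i : ℕ) (μ : Fin n → ℕ) : ℕ :=
  ∑ a ∈ Finset.image (fun σ : Equiv.Perm (Fin n) => μ ∘ σ) Finset.univ, torDim K n I i a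

/-- `dim_K Tor_i(R/I, K)_{⟨μ⟩}`. -/
noncomputable def torQDimSym (I : Ideal (MvPolynomial (Fin n) K)) (i : ℕ) (μ : Fin n → ℕ) : ℕ :=
  ∑ a ∈ Finset.image (fun σ : Equiv.Perm (Fin n) => μ ∘ σ) Finset.univ, torQDim K n I i a

end Tor

/-! ## Extended partitions in `P_n^∞` and the dual generators of an `S_n`-invariant
monomial ideal -/

section ExtendedPartitions

variable (K : Type) [Field K] (n : ℕ)

/-- `ℓ(μ)`: the number of entries of `μ ∈ P_n^∞` equal to `∞`. -/
def ellInf (μ : Fin n → ℕ∞) : ℕ := (Finset.univ.filter fun i => μ i = ⊤).card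

/-- The largest finite entry of `μ ∈ P_n^∞` (i.e. the first finite entry, `μ` being
weakly decreasing). -/
def topVal (μ : Fin n → ℕ∞) : ℕ := Finset.univ.sup fun i => (μ i).toNat

/-- `μ^+ ∈ P_n`: each `∞` entry of `μ` is replaced by (largest finite entry)` + 1`. -/
def plusOf (μ : Fin n → ℕ∞) (i : Fin n) : ℕ :=
  if μ i = ⊤ then topVal n μ + 1 else (μ i).toNat

/-- `μ̃ = μ^+ + (0^{ℓ(μ)}, 1^{n - ℓ(μ)}) ∈ P_n`. -/
def tildeOf (μ : Fin n → ℕ∞) (i : Fin n) : ℕ :=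
  if μ i = ⊤ then topVal n μ + 1 else (μ i).toNat + 1

/-- The ideal `Q_μ = ∩_{σ ∈ S_n} σ((x_k^{μ_k + 1}, …, x_n^{μ_n + 1}))`, where
`μ_k, …, μ_n` are the finite entries of `μ ∈ P_n^∞`. -/
noncomputable def Qgen (μ : Fin n → ℕ∞) : Ideal (MvPolynomial (Fin n) K) :=
  ⨅ σ : Equiv.Perm (Fin n),
    Ideal.map (MvPolynomial.rename σ).toRingHom
      (Ideal.span {g | ∃ i : Fin n, μ i ≠ ⊤ ∧ g = MvPolynomial.X i ^ ((μ i).toNat + 1)})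

/-- `Λ` is the (finite) set of dual generators of `I`, i.e. `I = ∩_{μ ∈ Λ} Q_μ` is the
irredundant presentation of `I` by ideals `Q_μ`. -/
def IsDualPresentation (I : Ideal (MvPolynomial (Fin n) K))
    (Λ : Finset (Fin n → ℕ∞)) : Prop :=
  (∀ μ ∈ Λ, Antitone μ) ∧ (I = ⨅ μ ∈ Λ, Qgen K n μ) ∧
    ∀ μ ∈ Λ, I ≠ ⨅ ρ ∈ Λ, ⨅ _ : ρ ≠ μ, Qgen K n ρ

/-- The partial order `≼` on dual generators: `μ ≼ ρ` iff `μ̃ ≤ ρ̃` (componentwise) and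
`ℓ(μ) - ℓ(ρ) ≤ |ρ̃| - |μ̃|`. -/
def preceq (μ ρ : Fin n → ℕ∞) : Prop :=
  (∀ i, tildeOf n μ i ≤ tildeOf n ρ i) ∧
    (∑ i, tildeOf n μ i) + ellInf n μ ≤ (∑ i, tildeOf n ρ i) + ellInf n ρ

/-- The extended partition `ρ = (∞^{p_0}, d_1^{p_1}, …, d_s^{p_s}) ∈ P_n^∞`
(so `n = p 0 + p 1 + ⋯ + p s`), as a function of the position `i ∈ {0, …, n-1}`. -/
def rhoOf (s : ℕ) (d p : ℕ → ℕ) (i : ℕ) : ℕ∞ :=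
  if blkOf p (s + 1) i = 0 then ⊤ else ((d (blkOf p (s + 1) i) : ℕ) : ℕ∞)

end ExtendedPartitions

/-! Write `a_F` for the exponent `ρ̃ ∖ (c + e_{[s] ∖ F})`. For `F = ∅` it is `ρ⁺`, which lies
below `ρ`, so `x^{a_∅} ∉ Q_ρ ⊇ I`. For `F ≠ ∅`, `a_F` is `ρ⁺` raised by one at the first entry of
a finite block, hence `a_F ≰ ρ`. If `x^{a_F} ∉ Q_τ` for a dual generator `τ`, then, both being
sorted, `a_F ≤ τ` termwise, so `τ ≠ ρ`; irredundancy forbids `ρ ≤ τ`, so `τ` is finite at some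
infinite entry of `ρ` and there it is at least `d_1 + 1`, and together with `ρ⁺ ≤ a_F ≤ τ` this
gives `ρ ≼ τ`, against the maximality of `ρ`. -/

lemma Fin.exists_le_and_perm_apply_le {n : ℕ} (σ : Equiv.Perm (Fin n)) (i : Fin n) :
    ∃ j, i ≤ j ∧ σ j ≤ i := by
  by_contra! h
  have hmaps : (Finset.Ici i).image σ ⊆ Finset.Ioi i := fun x hx => by
    obtain ⟨j, hj, rfl⟩ := Finset.mem_image.mp hx
    exact Finset.mem_Ioi.mpr (h j (Finset.mem_Ici.mp hj))
  have := Finset.card_le_card hmaps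
  rw [Finset.card_image_of_injective _ σ.injective, Fin.card_Ici, Fin.card_Ioi] at this
  omega

lemma Antitone.le_of_perm_le {n : ℕ} {α : Type*} [Preorder α] {a b : Fin n → α}
    (ha : Antitone a) (hb : Antitone b) (σ : Equiv.Perm (Fin n)) (h : ∀ i, a (σ i) ≤ b i) :
    a ≤ b := fun i => by
  obtain ⟨j, hij, hσj⟩ := Fin.exists_le_and_perm_apply_le σ i
  exact (ha hσj).trans ((h j).trans (hb hij))

section DualGenerators

variable {K : Type} [Field K] {n : ℕ}

lemma mon_mem_Qgen_iff (μ : Fin n → ℕ∞) (a : Fin n → ℕ) :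
    mon K n a ∈ Qgen K n μ ↔
      ∀ σ : Equiv.Perm (Fin n), ∃ i, μ i ≠ ⊤ ∧ (μ i).toNat + 1 ≤ a (σ i) := by
  simp only [Qgen, Submodule.mem_iInf, Ideal.map_span]
  refine forall_congr' fun σ => ?_
  have himage : (MvPolynomial.rename σ).toRingHom ''
      {g | ∃ i, μ i ≠ ⊤ ∧ g = MvPolynomial.X i ^ ((μ i).toNat + 1)} =
      (fun f => MvPolynomial.monomial f (1 : K)) ''
        {f | ∃ i, μ i ≠ ⊤ ∧ f = Finsupp.single (σ i) ((μ i).toNat + 1)} := by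
    ext g
    simp only [Set.mem_image, Set.mem_ofPred_eq, RingHom.coe_coe, AlgHom.toRingHom_eq_coe]
    constructor
    · rintro ⟨_, ⟨i, hi, rfl⟩, rfl⟩
      exact ⟨_, ⟨i, hi, rfl⟩, by
        rw [MvPolynomial.X_pow_eq_monomial, MvPolynomial.rename_monomial, Finsupp.mapDomain_single]⟩
    · rintro ⟨_, ⟨i, hi, rfl⟩, rfl⟩
      exact ⟨_, ⟨i, hi, rfl⟩, by
        rw [MvPolynomial.X_pow_eq_monomial, MvPolynomial.rename_monomial, Finsupp.mapDomain_single]⟩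
  rw [himage, mon, MvPolynomial.mem_ideal_span_monomial_image]
  simp only [MvPolynomial.support_monomial, one_ne_zero, if_false, Finset.mem_singleton,
    forall_eq, Set.mem_ofPred_eq]
  constructor
  · rintro ⟨_, ⟨i, hi, rfl⟩, hle⟩
    exact ⟨i, hi, by simpa using Finsupp.single_le_iff.mp hle⟩
  · rintro ⟨i, hi, hle⟩
    exact ⟨_, ⟨i, hi, rfl⟩, Finsupp.single_le_iff.mpr (by simpa using hle)⟩

lemma mon_notMem_Qgen_iff (μ : Fin n → ℕ∞) (a : Fin n → ℕ) :
    mon K n a ∉ Qgen K n μ ↔ ∃ σ : Equiv.Perm (Fin n), ∀ i, (a (σ i) : ℕ∞) ≤ μ i := by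
  rw [mon_mem_Qgen_iff]
  push Not
  refine exists_congr fun σ => forall_congr' fun i => ?_
  induction μ i <;> simp

lemma Qgen_antitone : Antitone (Qgen K n) := by
  intro μ ρ h
  refine iInf_mono fun σ => Ideal.map_mono (Ideal.span_le.mpr ?_)
  rintro g ⟨i, hi, rfl⟩
  lift ρ i to ℕ using hi with r hr
  have hμi : μ i ≠ ⊤ := ne_top_of_le_ne_top (by simp) (hr ▸ h i)
  lift μ i to ℕ using hμi with m hm
  have hmr : (m : ℕ∞) ≤ r := hr ▸ hm ▸ h i
  norm_cast at hmr
  rw [ENat.toNat_natCast, show r + 1 = (m + 1) + (r - m) by omega, pow_add]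
  exact Ideal.mul_mem_right _ _ (Ideal.subset_span ⟨i, by simp [← hm], by simp [← hm]⟩)

lemma toNat_le_topVal (μ : Fin n → ℕ∞) (i : Fin n) : (μ i).toNat ≤ topVal n μ :=
  Finset.le_sup (f := fun i => (μ i).toNat) (Finset.mem_univ i)

lemma tildeOf_le_topVal_succ (μ : Fin n → ℕ∞) (i : Fin n) : tildeOf n μ i ≤ topVal n μ + 1 := by
  have := toNat_le_topVal μ i
  unfold tildeOf
  split_ifs <;> omega

lemma ellInf_eq_sum (μ : Fin n → ℕ∞) : ellInf n μ = ∑ i, if μ i = ⊤ then 1 else 0 :=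
  Finset.card_filter _ _

namespace IsDualPresentation

variable {I : Ideal (MvPolynomial (Fin n) K)} {Λ : Finset (Fin n → ℕ∞)} {ρ τ : Fin n → ℕ∞}

lemma mon_mem_iff (h : IsDualPresentation K n I Λ) {a : Fin n → ℕ} :
    mon K n a ∈ I ↔ ∀ τ ∈ Λ, mon K n a ∈ Qgen K n τ := by
  rw [h.2.1]
  simp only [Submodule.mem_iInf]

lemma not_le_of_ne (h : IsDualPresentation K n I Λ) (hρ : ρ ∈ Λ) (hτ : τ ∈ Λ) (hne : τ ≠ ρ) :
    ¬ ρ ≤ τ := by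
  intro hle
  refine h.2.2 ρ hρ (le_antisymm (le_iInf₂ fun μ hμ => le_iInf fun _ => ?_) ?_)
  · rw [h.2.1]
    exact iInf₂_le μ hμ
  · rw [h.2.1]
    refine le_iInf₂ fun μ hμ => ?_
    by_cases hμρ : μ = ρ
    · subst hμρ
      exact (iInf₂_le τ hτ).trans ((iInf_le _ hne).trans (Qgen_antitone hle))
    · exact (iInf₂_le μ hμ).trans (iInf_le _ hμρ)

lemma preceq_of_plusOf_le (h : IsDualPresentation K n I Λ) (hρ : ρ ∈ Λ) (hτ : τ ∈ Λ)
    (hne : τ ≠ ρ) {a : Fin n → ℕ} (hρa : ∀ i, plusOf n ρ i ≤ a i)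
    (haτ : ∀ i, (a i : ℕ∞) ≤ τ i) : preceq n ρ τ := by
  have hfin : ∀ i, τ i ≠ ⊤ → plusOf n ρ i ≤ (τ i).toNat := fun i hi =>
    (hρa i).trans (by simpa using ENat.toNat_le_toNat (haτ i) hi)
  -- By irredundancy `ρ ≰ τ`, which forces `τ` to be finite at some infinite entry of `ρ`.
  obtain ⟨j, hρj, hτj⟩ : ∃ j, ρ j = ⊤ ∧ τ j ≠ ⊤ := by
    by_contra! H
    refine h.not_le_of_ne hρ hτ hne fun i => ?_
    by_cases hρi : ρ i = ⊤
    · simp [H i hρi]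
    by_cases hτi : τ i = ⊤
    · simp [hτi]
    have := hfin i hτi
    rw [plusOf, if_neg hρi] at this
    rw [← ENat.natCast_toNat hρi, ← ENat.natCast_toNat hτi]
    exact Nat.cast_le.mpr this
  have htop : topVal n ρ < topVal n τ := by
    have := hfin j hτj
    rw [plusOf, if_pos hρj] at this
    exact this.trans (toNat_le_topVal τ j)
  have hpt : ∀ i, tildeOf n ρ i ≤ tildeOf n τ i ∧
      tildeOf n ρ i + (if ρ i = ⊤ then 1 else 0) ≤ tildeOf n τ i + (if τ i = ⊤ then 1 else 0) := by
    intro i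
    have hρle := tildeOf_le_topVal_succ ρ i
    by_cases hτi : τ i = ⊤
    · by_cases hρi : ρ i = ⊤ <;>
        simp only [tildeOf, hτi, hρi, reduceIte] at hρle ⊢ <;> omega
    · have := hfin i hτi
      by_cases hρi : ρ i = ⊤ <;>
        simp only [tildeOf, plusOf, hτi, hρi, reduceIte] at this ⊢ <;> omega
  refine ⟨fun i => (hpt i).1, ?_⟩
  rw [ellInf_eq_sum, ellInf_eq_sum, ← Finset.sum_add_distrib, ← Finset.sum_add_distrib]
  exact Finset.sum_le_sum fun i _ => (hpt i).2

theorem mon_mem_of_plusOf_le (h : IsDualPresentation K n I Λ) (hρ : ρ ∈ Λ)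
    (hmax : ∀ μ ∈ Λ, preceq n ρ μ → μ = ρ) {a : Fin n → ℕ} (ha : Antitone a)
    (hρa : ∀ i, plusOf n ρ i ≤ a i) (haρ : ∃ i, ρ i < a i) : mon K n a ∈ I := by
  refine h.mon_mem_iff.mpr fun τ hτ => ?_
  by_contra hnot
  obtain ⟨σ, hσ⟩ := (mon_notMem_Qgen_iff τ a).mp hnot
  have haτ : ∀ i, (a i : ℕ∞) ≤ τ i :=
    Antitone.le_of_perm_le (Nat.mono_cast.comp_antitone ha) (h.1 τ hτ) σ hσ
  obtain ⟨i, hi⟩ := haρ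
  have hne : τ ≠ ρ := by
    rintro rfl
    exact (haτ i).not_gt hi
  exact hne (hmax τ hτ (h.preceq_of_plusOf_le hρ hτ hne hρa haτ))

theorem mon_notMem_of_le (h : IsDualPresentation K n I Λ) (hρ : ρ ∈ Λ) {a : Fin n → ℕ}
    (haρ : ∀ i, (a i : ℕ∞) ≤ ρ i) : mon K n a ∉ I := fun hmem =>
  (mon_notMem_Qgen_iff ρ a).mpr ⟨1, haρ⟩ (h.mon_mem_iff.mp hmem ρ hρ)

end IsDualPresentation

end DualGenerators

section Blocks

variable {s : ℕ} {d p : ℕ → ℕ}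

lemma cumsum_succ (p : ℕ → ℕ) (k : ℕ) : cumsum p (k + 1) = cumsum p k + p k :=
  Finset.sum_range_succ p k

lemma cumsum_mono (p : ℕ → ℕ) : Monotone (cumsum p) := fun _ _ h =>
  Finset.sum_le_sum_of_subset (Finset.range_subset_range.2 h)

lemma blkOf_mono (p : ℕ → ℕ) (s : ℕ) : Monotone (blkOf p s) := fun _ _ h =>
  Finset.card_le_card fun _ hk => by
    simp only [Finset.mem_filter] at hk ⊢
    exact ⟨hk.1, hk.2.trans h⟩

lemma blkOf_eq {i k : ℕ} (hk : k < s) (hki : cumsum p k ≤ i) (hik : i < cumsum p (k + 1)) :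
    blkOf p s i = k := by
  suffices (Finset.range s).filter (fun j => cumsum p (j + 1) ≤ i) = Finset.range k by
    rw [blkOf, this, Finset.card_range]
  ext j
  simp only [Finset.mem_filter, Finset.mem_range]
  constructor
  · rintro ⟨-, hj⟩
    by_contra! hkj
    exact absurd ((cumsum_mono p (by omega : k + 1 ≤ j + 1)).trans hj) (by omega)
  · exact fun hjk => ⟨by omega, (cumsum_mono p (by omega : j + 1 ≤ k)).trans hki⟩

lemma exists_cumsum_le_lt {i : ℕ} (h : i < cumsum p s) :
    ∃ k < s, cumsum p k ≤ i ∧ i < cumsum p (k + 1) := by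
  induction s with
  | zero => simp [cumsum] at h
  | succ m ih =>
    by_cases hm : i < cumsum p m
    · obtain ⟨k, hkm, hki, hik⟩ := ih hm
      exact ⟨k, by omega, hki, hik⟩
    · exact ⟨m, by omega, by omega, h⟩

lemma muMinus_antitone {c : ℕ → ℕ} (hd : StrictAntiOn d (Set.Iio s)) :
    Antitone (muMinus s d p c) := by
  intro i j hij
  have hb := blkOf_mono p s hij
  unfold muMinus
  by_cases hj : blkOf p s j < s
  · have hi : blkOf p s i < s := hb.trans_lt hj
    rw [if_pos hj, if_pos hi]
    rcases hb.eq_or_lt with heq | hlt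
    · rw [heq]
      split_ifs <;> omega
    · have := hd hi hj hlt
      split_ifs <;> omega
  · rw [if_neg hj]
    exact Nat.zero_le _

lemma StrictAntiOn.Icc_of_succ_lt (hd : ∀ k, 1 ≤ k → k + 1 ≤ s → d (k + 1) < d k) :
    StrictAntiOn d (Set.Icc 1 s) :=
  strictAntiOn_of_succ_lt Set.ordConnected_Icc fun k _ hk hk1 =>
    hd k hk.1 (by simpa using hk1.2)

lemma rhoOf_eq {i k : ℕ} (hk : k ≤ s) (hki : cumsum p k ≤ i) (hik : i < cumsum p (k + 1)) :
    rhoOf s d p i = if k = 0 then ⊤ else (d k : ℕ∞) := by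
  rw [rhoOf, blkOf_eq (Nat.lt_succ_of_le hk) hki hik]

-- `ρ̃` and `c + e_{[s] ∖ F}` in the block encoding of `muMinus`, with blocks indexed from `0`.
def rhoTildeVal (d : ℕ → ℕ) (k : ℕ) : ℕ := d (k + 1) + 1

def rhoTildeMult (s : ℕ) (p : ℕ → ℕ) (k : ℕ) : ℕ :=
  if k = 0 then p 0 + p 1 else if k < s then p (k + 1) else 0

def gammaCut (s : ℕ) (p : ℕ → ℕ) (F : Finset ℕ) (j : ℕ) : ℕ :=
  p (j + 1) - 1 + if j < s ∧ j ∉ F then 1 else 0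

lemma StrictAntiOn.rhoTildeVal (hd : StrictAntiOn d (Set.Icc 1 s)) :
    StrictAntiOn (rhoTildeVal d) (Set.Iio s) := fun a ha b hb hab => by
  rw [Set.mem_Iio] at ha hb
  have := hd (a := a + 1) (b := b + 1) ⟨by omega, by omega⟩ ⟨by omega, by omega⟩ (by omega)
  simp only [_root_.rhoTildeVal]
  omega

lemma cumsum_rhoTildeMult_succ {m : ℕ} (hm : m < s) :
    cumsum (rhoTildeMult s p) (m + 1) = cumsum p (m + 1 + 1) := by
  induction m with
  | zero => simp [cumsum, rhoTildeMult, Finset.sum_range_succ]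
  | succ m ih =>
    rw [cumsum_succ, ih (by omega), cumsum_succ p (m + 1 + 1)]
    simp [rhoTildeMult, hm]

-- That is, `ρ⁺` raised by one at the first entry of each block `k` of `ρ` with `k - 1 ∈ F`.
lemma muMinus_rhoTilde_eq (hs : 0 < s) (hp1 : 0 < p 1) (F : Finset ℕ) {i k : ℕ} (hk : k ≤ s)
    (hki : cumsum p k ≤ i) (hik : i < cumsum p (k + 1)) :
    muMinus s (rhoTildeVal d) (rhoTildeMult s p) (gammaCut s p F) i =
      if k = 0 then d 1 + 1 else if i = cumsum p k ∧ k - 1 ∈ F then d k + 1 else d k := by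
  have hc1 : cumsum p 1 = p 0 := Finset.sum_range_one p
  have hM0 : rhoTildeMult s p 0 = p 0 + p 1 := if_pos rfl
  have hC0 : cumsum (rhoTildeMult s p) 0 = 0 := Finset.sum_range_zero _
  rcases k with _ | m
  · rw [zero_add, hc1] at hik
    have hcut : gammaCut s p F 0 ≤ p 1 := by
      simp only [gammaCut, zero_add]
      split_ifs <;> omega
    have hb : blkOf (rhoTildeMult s p) s i = 0 :=
      blkOf_eq hs (by omega) (by rw [cumsum_rhoTildeMult_succ hs, cumsum_succ, hc1]; omega)
    rw [muMinus, hb, if_pos hs, if_neg (by omega), if_pos rfl]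
    rfl
  · have hpm : 0 < p (m + 1) := by
      have := cumsum_succ p (m + 1)
      omega
    have hlow : cumsum (rhoTildeMult s p) m ≤ i := by
      rcases m with _ | m'
      · omega
      · rwa [cumsum_rhoTildeMult_succ (by omega)]
    have hb : blkOf (rhoTildeMult s p) s i = m :=
      blkOf_eq (by omega) hlow (by rwa [cumsum_rhoTildeMult_succ (by omega)])
    have hthr : rhoTildeMult s p m - gammaCut s p F m + cumsum (rhoTildeMult s p) m =
        cumsum p (m + 1) + if m ∈ F then 1 else 0 := by
      have hm : m < s := by omega
      rcases m with _ | m'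
      · simp only [gammaCut, zero_add, hM0, hC0, hc1, hm, true_and]
        split_ifs <;> omega
      · rw [cumsum_rhoTildeMult_succ (by omega)]
        simp only [rhoTildeMult, gammaCut, Nat.add_one_ne_zero, hm, true_and, reduceIte]
        split_ifs <;> omega
    rw [muMinus, hb, if_pos (by omega : m < s)]
    simp only [rhoTildeVal, Nat.add_one_ne_zero, Nat.add_sub_cancel, reduceIte]
    by_cases hmF : m ∈ F <;> simp only [hmF, reduceIte, and_true, and_false] at hthr ⊢ <;>
      split_ifs <;> omega

end Blocks

section RhoTilde

variable {n s : ℕ} {d p : ℕ → ℕ}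

lemma topVal_rhoOf (hn : n = cumsum p (s + 1)) (hd : StrictAntiOn d (Set.Icc 1 s)) (hs : 0 < s)
    (hp1 : 0 < p 1) : topVal n (fun i : Fin n => rhoOf s d p i) = d 1 := by
  have hc1 : cumsum p 1 = p 0 := Finset.sum_range_one p
  refine le_antisymm (Finset.sup_le fun i _ => ?_) ?_
  · obtain ⟨k, hk, hki, hik⟩ := exists_cumsum_le_lt (i.isLt.trans_eq hn)
    dsimp only
    rw [rhoOf_eq (by omega) hki hik]
    split_ifs with hk0
    · simp
    · simpa using hd.antitoneOn ⟨le_rfl, hs⟩ ⟨by omega, by omega⟩ (by omega : 1 ≤ k)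
  · have hc2 : cumsum p (1 + 1) = p 0 + p 1 := by rw [cumsum_succ, hc1]
    have hp0 : p 0 < n := by
      have := cumsum_mono p (show 1 + 1 ≤ s + 1 by omega)
      omega
    have := toNat_le_topVal (fun i : Fin n => rhoOf s d p i) ⟨p 0, hp0⟩
    rwa [rhoOf_eq (k := 1) (by omega) hc1.le (by omega), if_neg one_ne_zero,
      ENat.toNat_natCast] at this

lemma plusOf_rhoOf_le_muMinus (hn : n = cumsum p (s + 1)) (hd : StrictAntiOn d (Set.Icc 1 s))
    (hs : 0 < s) (hp1 : 0 < p 1) (F : Finset ℕ) (i : Fin n) :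
    plusOf n (fun i : Fin n => rhoOf s d p i) i ≤
      muMinus s (rhoTildeVal d) (rhoTildeMult s p) (gammaCut s p F) i := by
  obtain ⟨k, hk, hki, hik⟩ := exists_cumsum_le_lt (i.isLt.trans_eq hn)
  rw [plusOf, topVal_rhoOf hn hd hs hp1, rhoOf_eq (by omega) hki hik,
    muMinus_rhoTilde_eq hs hp1 F (by omega) hki hik]
  by_cases hk0 : k = 0
  · simp [hk0]
  · simp only [hk0, reduceIte, ENat.natCast_ne_top, ENat.toNat_natCast]
    split_ifs <;> omega

lemma exists_rhoOf_lt_muMinus (hn : n = cumsum p (s + 1)) (hp : ∀ k, 1 ≤ k → k ≤ s → 0 < p k)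
    {F : Finset ℕ} (hFs : F ⊆ Finset.range s) (hF : F.Nonempty) :
    ∃ i : Fin n,
      rhoOf s d p i < muMinus s (rhoTildeVal d) (rhoTildeMult s p) (gammaCut s p F) i := by
  obtain ⟨m, hm⟩ := hF
  have hms : m < s := Finset.mem_range.mp (hFs hm)
  have hpm := hp (m + 1) (by omega) (by omega)
  have hstep := cumsum_succ p (m + 1)
  have hin : cumsum p (m + 1) < n := by
    have := cumsum_mono p (by omega : m + 1 + 1 ≤ s + 1)
    omega
  refine ⟨⟨cumsum p (m + 1), hin⟩, ?_⟩
  rw [rhoOf_eq (k := m + 1) (by omega) le_rfl (by omega),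
    muMinus_rhoTilde_eq (by omega) (hp 1 le_rfl (by omega)) F (k := m + 1) (by omega) le_rfl
      (by omega)]
  simp only [Nat.add_one_ne_zero, reduceIte, Nat.add_sub_cancel, hm, and_self]
  exact_mod_cast Nat.lt_add_one _

lemma muMinus_empty_le_rhoOf (hn : n = cumsum p (s + 1)) (hp : ∀ k, 1 ≤ k → k ≤ s → 0 < p k)
    (i : Fin n) :
    (muMinus s (rhoTildeVal d) (rhoTildeMult s p) (gammaCut s p ∅) i : ℕ∞) ≤ rhoOf s d p i := by
  rcases Nat.eq_zero_or_pos s with rfl | hs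
  · simp [muMinus]
  obtain ⟨k, hk, hki, hik⟩ := exists_cumsum_le_lt (i.isLt.trans_eq hn)
  rw [rhoOf_eq (by omega) hki hik, muMinus_rhoTilde_eq hs (hp 1 le_rfl hs) ∅ (by omega) hki hik]
  split_ifs <;> simp_all

end RhoTilde

theorem statement_8_general (K : Type) [Field K] (n : ℕ) (I : Ideal (MvPolynomial (Fin n) K))
    (Λ : Finset (Fin n → ℕ∞)) (hpres : IsDualPresentation K n I Λ)
    (s : ℕ) (d p : ℕ → ℕ)
    (hn : n = cumsum p (s + 1))
    (hd : ∀ k, 1 ≤ k → k + 1 ≤ s → d (k + 1) < d k)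
    (hp : ∀ k, 1 ≤ k → k ≤ s → 0 < p k)
    (ρ : Fin n → ℕ∞) (hρdef : ρ = fun i => rhoOf s d p i.val)
    (hρΛ : ρ ∈ Λ) (hmax : ∀ μ ∈ Λ, preceq n ρ μ → μ = ρ) :
    GammaCx K n I s (fun k => d (k + 1) + 1)
        (fun k => if k = 0 then p 0 + p 1 else if k < s then p (k + 1) else 0)
        (fun k => p (k + 1) - 1)
      = {(∅ : Finset ℕ)} := by
  subst hρdef
  have hd' := StrictAntiOn.Icc_of_succ_lt hd
  ext F
  change F ⊆ Finset.range s ∧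
      mon K n (fun i => muMinus s (rhoTildeVal d) (rhoTildeMult s p) (gammaCut s p F) i) ∉ I ↔
    F = ∅
  constructor
  · rintro ⟨hFs, hF⟩
    by_contra hFe
    have hFne := Finset.nonempty_iff_ne_empty.mpr hFe
    have hs : 0 < s := by
      obtain ⟨m, hm⟩ := hFne
      exact Nat.zero_lt_of_lt (Finset.mem_range.mp (hFs hm))
    exact hF (hpres.mon_mem_of_plusOf_le hρΛ hmax
      (fun i j hij => muMinus_antitone hd'.rhoTildeVal hij)
      (plusOf_rhoOf_le_muMinus hn hd' hs (hp 1 le_rfl hs) F)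
      (exists_rhoOf_lt_muMinus hn hp hFs hFne))
  · rintro rfl
    exact ⟨Finset.empty_subset _, hpres.mon_notMem_of_le hρΛ (muMinus_empty_le_rhoOf hn hp)⟩

/-- Let `I` be a nonzero, proper `S_n`-invariant monomial ideal and
`ρ = (∞^{p_0}, d_1^{p_1}, …, d_s^{p_s}) ∈ Λ*_max(I)` a maximal dual generator, with
`∞ > d_1 > ⋯ > d_s ≥ 0`.  Set `c = (p_1 - 1, …, p_s - 1)`.  Then `Γ^{ρ̃,c}(I) = {∅}`,
where `ρ̃ = ((d_1+1)^{p_0+p_1}, (d_2+1)^{p_2}, …, (d_s+1)^{p_s})`. -/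
theorem statement_8 (K : Type) [Field K] (n : ℕ) (I : Ideal (MvPolynomial (Fin n) K))
    (hmon : IsMonomialIdeal K n I) (hsym : IsSymmetricIdeal K n I)
    (hne : I ≠ ⊥) (hproper : I ≠ ⊤)
    (Λ : Finset (Fin n → ℕ∞)) (hpres : IsDualPresentation K n I Λ)
    (s : ℕ) (d p : ℕ → ℕ)
    (hn : n = cumsum p (s + 1))
    (hd : ∀ k, 1 ≤ k → k + 1 ≤ s → d (k + 1) < d k)
    (hp : ∀ k, 1 ≤ k → k ≤ s → 0 < p k)
    (ρ : Fin n → ℕ∞) (hρdef : ρ = fun i => rhoOf s d p i.val)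
    (hρΛ : ρ ∈ Λ) (hmax : ∀ μ ∈ Λ, preceq n ρ μ → μ = ρ) :
    GammaCx K n I s (fun k => d (k + 1) + 1)
        (fun k => if k = 0 then p 0 + p 1 else if k < s then p (k + 1) else 0)
        (fun k => p (k + 1) - 1)
      = {(∅ : Finset ℕ)} :=
  statement_8_general K n I Λ hpres s d p hn hd hp ρ hρdef hρΛ hmax
end
end

section
/- Let Δ be a simplicial complex on the vertex set [n] = {1,…,n} and let k be a field. If H̃_{i−1}(Δ; k) ≠ 0 for some i ≥ 0, then there exists a facet F of Δ with 1 ∉ F and |F| ≥ i. -/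
open scoped BigOperators

noncomputable section
open Classical

/-!
Suppose every facet avoiding the vertex `1` has fewer than `i` vertices. A face `G` with `i`
vertices lies in some facet, which must then contain `1`, so `G ∪ {1}` is a face. Coning with `1`,
`G ↦ -(G ∪ {1})`, therefore satisfies `∂h + h∂ = id` on `i`-chains (the signs work out because
`1` is the least vertex), so every cycle there is a boundary and `H̃_{i-1}(Δ; k) = 0`.
-/

-- lets `Finsupp` lemmas see the subtype behind the chain basis
attribute [reducible] ChainIdx

section Cone

variable (K : Type) [Field K] {α : Type} (S : Set (α × Finset ℕ))

def faceChain (j : ℕ) (p : α × Finset ℕ) : ChainIdx S j →₀ K :=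
  if h : p ∈ S ∧ p.2.card = j then Finsupp.single ⟨p, h⟩ 1 else 0

def cone (x j : ℕ) : (ChainIdx S j →₀ K) →ₗ[K] (ChainIdx S (j + 1) →₀ K) :=
  Finsupp.linearCombination K fun q => -faceChain K S (j + 1) (q.1.1, insert x q.1.2)

variable {K S}

lemma faceChain_val {j : ℕ} (q : ChainIdx S j) : faceChain K S j q.1 = Finsupp.single q 1 :=
  dif_pos q.2

lemma faceChain_of_card_ne {j : ℕ} {p : α × Finset ℕ} (h : p.2.card ≠ j) :
    faceChain K S j p = 0 :=
  dif_neg fun h' => h h'.2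

lemma bd_single {j : ℕ} (q : ChainIdx S (j + 1)) :
    bd K S j (Finsupp.single q 1) =
      ∑ v ∈ q.1.2, (-1 : K) ^ (q.1.2.filter (· ≤ v)).card •
        faceChain K S j (q.1.1, q.1.2.erase v) := by
  rw [bd, Finsupp.linearCombination_single, one_smul, bdElt]
  refine Finset.sum_congr rfl fun v _ => ?_
  unfold faceChain
  split_ifs <;> simp [Finsupp.smul_single]

lemma cone_faceChain (x : ℕ) {j : ℕ} {p : α × Finset ℕ} (hp : p ∈ S) (hc : p.2.card = j) :
    cone K S x j (faceChain K S j p) = -faceChain K S (j + 1) (p.1, insert x p.2) := by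
  rw [faceChain, dif_pos ⟨hp, hc⟩, cone, Finsupp.linearCombination_single, one_smul]

lemma card_filter_le_of_min {x : ℕ} {H : Finset ℕ} (hx : x ∈ H) (hmin : ∀ v ∈ H, x ≤ v) :
    (H.filter (· ≤ x)).card = 1 := by
  rw [Finset.card_eq_one]
  refine ⟨x, Finset.ext fun u => ?_⟩
  simp only [Finset.mem_filter, Finset.mem_singleton]
  exact ⟨fun h => le_antisymm h.2 (hmin u h.1), by rintro rfl; exact ⟨hx, le_rfl⟩⟩

/-- The sum is `-cone (∂G)`, so this is `∂(xG) = G - x∂G` for the cone `xG` over `G`. -/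
lemma bd_cone_single_of_notMem {x j : ℕ} (q : ChainIdx S j) (hx : x ∉ q.1.2)
    (hmin : ∀ v ∈ q.1.2, x ≤ v) (hcone : (q.1.1, insert x q.1.2) ∈ S) :
    bd K S j (cone K S x j (Finsupp.single q 1)) = Finsupp.single q 1 +
      ∑ v ∈ q.1.2, (-1 : K) ^ (q.1.2.filter (· ≤ v)).card •
        faceChain K S j (q.1.1, insert x (q.1.2.erase v)) := by
  obtain ⟨⟨a, G⟩, hqS, hqc⟩ := q
  dsimp only at hx hmin hcone ⊢
  have hcard : (insert x G).card = j + 1 := by rw [Finset.card_insert_of_notMem hx, hqc]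
  have hbd : bd K S j (faceChain K S (j + 1) (a, insert x G)) =
      bd K S j (Finsupp.single ⟨(a, insert x G), hcone, hcard⟩ 1) := by
    rw [faceChain, dif_pos ⟨hcone, hcard⟩]
  rw [cone, Finsupp.linearCombination_single, one_smul, map_neg, hbd, bd_single]
  dsimp only
  rw [Finset.sum_insert hx, Finset.erase_insert hx,
    card_filter_le_of_min (Finset.mem_insert_self x G) (by simpa using hmin)]
  have hterm : ∀ v ∈ G, (-1 : K) ^ ((insert x G).filter (· ≤ v)).card •
      faceChain K S j (a, (insert x G).erase v) =
      -((-1 : K) ^ (G.filter (· ≤ v)).card • faceChain K S j (a, insert x (G.erase v))) := by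
    intro v hv
    have hxv : x ≠ v := fun h => hx (h ▸ hv)
    rw [Finset.erase_insert_of_ne hxv, Finset.filter_insert, if_pos (hmin v hv),
      Finset.card_insert_of_notMem fun h => hx (Finset.mem_filter.1 h).1, pow_succ, mul_neg_one,
      neg_smul]
  rw [Finset.sum_congr rfl hterm, faceChain_val ⟨(a, G), hqS, hqc⟩, Finset.sum_neg_distrib,
    pow_one, neg_one_smul, neg_add, neg_neg, neg_neg]

lemma cone_bd_single (x : ℕ) {j : ℕ} (q : ChainIdx S (j + 1))
    (hdown : ∀ G ⊆ q.1.2, (q.1.1, G) ∈ S) :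
    cone K S x j (bd K S j (Finsupp.single q 1)) =
      -∑ v ∈ q.1.2, (-1 : K) ^ (q.1.2.filter (· ≤ v)).card •
        faceChain K S (j + 1) (q.1.1, insert x (q.1.2.erase v)) := by
  rw [bd_single, map_sum, ← Finset.sum_neg_distrib]
  refine Finset.sum_congr rfl fun v hv => ?_
  have hcard : (q.1.2.erase v).card = j := by rw [Finset.card_erase_of_mem hv, q.2.2]; rfl
  rw [map_smul, cone_faceChain x (hdown _ (Finset.erase_subset v _)) hcard, smul_neg]

lemma cone_single_of_mem {x j : ℕ} (q : ChainIdx S j) (hx : x ∈ q.1.2) :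
    cone K S x j (Finsupp.single q 1) = 0 := by
  rw [cone, Finsupp.linearCombination_single, one_smul, Finset.insert_eq_of_mem hx,
    faceChain_of_card_ne (by rw [q.2.2]; omega), neg_zero]

/-- When `x` already lies in `G`, only the term `v = x` of the sum survives. -/
lemma sum_faceChain_insert_erase_of_mem {x j : ℕ} (q : ChainIdx S (j + 1)) (hx : x ∈ q.1.2)
    (hmin : ∀ v ∈ q.1.2, x ≤ v) :
    ∑ v ∈ q.1.2, (-1 : K) ^ (q.1.2.filter (· ≤ v)).card •
      faceChain K S (j + 1) (q.1.1, insert x (q.1.2.erase v)) = -Finsupp.single q 1 := by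
  rw [Finset.sum_eq_single x, Finset.insert_erase hx, card_filter_le_of_min hx hmin,
    faceChain_val, pow_one, neg_one_smul]
  · intro v hv hvx
    have hcard : (insert x (q.1.2.erase v)).card ≠ j + 1 := by
      rw [Finset.insert_eq_of_mem (Finset.mem_erase.2 ⟨Ne.symm hvx, hx⟩),
        Finset.card_erase_of_mem hv, q.2.2]
      omega
    rw [faceChain_of_card_ne hcard, smul_zero]
  · exact fun h => (h hx).elim

end Cone

section Contraction

variable {K : Type} [Field K] {α : Type} {S : Set (α × Finset ℕ)} {x : ℕ}

lemma bd_comp_cone_zero (hcone : ∀ p ∈ S, p.2.card = 0 → (p.1, insert x p.2) ∈ S) :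
    bd K S 0 ∘ₗ cone K S x 0 = LinearMap.id := by
  refine Finsupp.basisSingleOne.ext fun q => ?_
  have hq : q.1.2 = ∅ := Finset.card_eq_zero.1 q.2.2
  simp only [LinearMap.comp_apply, LinearMap.id_apply, Finsupp.coe_basisSingleOne]
  rw [bd_cone_single_of_notMem q (by simp [hq]) (by simp [hq]) (hcone _ q.2.1 q.2.2)]
  simp [hq]

variable (hdown : ∀ p ∈ S, ∀ G ⊆ p.2, (p.1, G) ∈ S) (hmin : ∀ p ∈ S, ∀ v ∈ p.2, x ≤ v)
include hdown hmin

lemma bd_comp_cone_add_cone_comp_bd (m : ℕ)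
    (hcone : ∀ p ∈ S, p.2.card = m + 1 → (p.1, insert x p.2) ∈ S) :
    bd K S (m + 1) ∘ₗ cone K S x (m + 1) + cone K S x m ∘ₗ bd K S m = LinearMap.id := by
  refine Finsupp.basisSingleOne.ext fun q => ?_
  simp only [LinearMap.add_apply, LinearMap.comp_apply, LinearMap.id_apply,
    Finsupp.coe_basisSingleOne]
  have hqmin : ∀ v ∈ q.1.2, x ≤ v := hmin _ q.2.1
  rw [cone_bd_single x q (hdown _ q.2.1)]
  by_cases hx : x ∈ q.1.2
  · rw [cone_single_of_mem q hx, map_zero, zero_add,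
      sum_faceChain_insert_erase_of_mem q hx hqmin, neg_neg]
  · rw [bd_cone_single_of_notMem q hx hqmin (hcone _ q.2.1 q.2.2), add_neg_cancel_right]

lemma cycles_le_range_bd {i : ℕ} (hcone : ∀ p ∈ S, p.2.card = i → (p.1, insert x p.2) ∈ S) :
    cycles K S i ≤ LinearMap.range (bd K S i) := by
  intro z hz
  cases i with
  | zero => exact ⟨cone K S x 0 z, LinearMap.congr_fun (bd_comp_cone_zero hcone) z⟩
  | succ m =>
    refine ⟨cone K S x (m + 1) z, ?_⟩
    have h := LinearMap.congr_fun (bd_comp_cone_add_cone_comp_bd hdown hmin m hcone) z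
    rwa [LinearMap.add_apply, LinearMap.comp_apply, LinearMap.comp_apply,
      LinearMap.mem_ker.1 hz, map_zero, add_zero] at h

lemma rhd_eq_zero_of_cone {i : ℕ} (hcone : ∀ p ∈ S, p.2.card = i → (p.1, insert x p.2) ∈ S) :
    rhd K S i = 0 := by
  rw [rhd, inf_eq_right.2 (cycles_le_range_bd hdown hmin hcone), Nat.sub_self]

end Contraction

/-- A face with `i` vertices lies in a facet, which must then contain `x`. -/
lemma insert_mem_of_card_lt_of_facet {Δ : Set (Finset ℕ)} (hfin : Δ.Finite)
    (hdown : ∀ F ∈ Δ, ∀ G : Finset ℕ, G ⊆ F → G ∈ Δ) {x i : ℕ}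
    (hfacet : ∀ F ∈ Δ, (∀ G ∈ Δ, F ⊆ G → G = F) → x ∉ F → F.card < i)
    {G : Finset ℕ} (hG : G ∈ Δ) (hcard : G.card = i) : insert x G ∈ Δ := by
  obtain ⟨F, hGF, hF⟩ := hfin.exists_le_maximal hG
  by_cases hx : x ∈ F
  · exact hdown F hF.1 _ (Finset.insert_subset hx hGF)
  · have hlt := hfacet F hF.1 (fun H hH hFH => (hF.2 hH hFH).antisymm hFH) hx
    have hle := Finset.card_le_card hGF
    omega

/-- Let `Δ` be a simplicial complex on the vertex set `[n] = {1, …, n}`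
and `k` a field. If `H̃_{i-1}(Δ; k) ≠ 0` for some `i ≥ 0`, then there exists a facet `F`
of `Δ` with `1 ∉ F` and `|F| ≥ i`. -/
theorem statement_10 (K : Type) [Field K] (n : ℕ) (Δ : Set (Finset ℕ))
    (hvert : ∀ F ∈ Δ, F ⊆ Finset.Icc 1 n)
    (hdown : ∀ F ∈ Δ, ∀ G : Finset ℕ, G ⊆ F → G ∈ Δ)
    (i : ℕ) (hne : hdim0 K Δ ((i : ℤ) - 1) ≠ 0) :
    ∃ F ∈ Δ, (∀ G ∈ Δ, F ⊆ G → G = F) ∧ 1 ∉ F ∧ i ≤ F.card := by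
  by_contra! hfacet
  have hfin : Δ.Finite :=
    (Finset.Icc 1 n).powerset.finite_toSet.subset fun F hF => Finset.mem_powerset.2 (hvert F hF)
  have hrhd : rhd K (lab Δ) i = 0 :=
    rhd_eq_zero_of_cone (x := 1) (fun p hp G hG => hdown _ hp G hG)
      (fun p hp v hv => (Finset.mem_Icc.1 (hvert _ hp hv)).1)
      (fun p hp hcard => insert_mem_of_card_lt_of_facet hfin hdown hfacet hp hcard)
  exact hne (by simpa [hdim0, hdim] using hrhd)
end
end

section
/- Let I ⊆ R be a nonzero, proper S_n-invariant monomial ideal, μ = (d_1^{p_1},…,d_s^{p_s},0^{p_{s+1}}) ∈ P_n with d_1 > ⋯ > d_s > 0, and c ≤ p(μ). Let F be a facet of Γ^{μ,c}(I) with 1 ∉ F, set μ' = μ∖(c+e_{[s]∖F}) = (μ'_1,…,μ'_n), and h = min{i : μ'_i ≠ μ_1} (well-defined since 1 ∉ F forces the first entry of c+e_{[s]∖F} to be positive). If ρ = (∞,…,∞,ρ_l,…,ρ_n) ∈ Λ*(I) with ρ_l ≠ ∞ and μ' ≤ ρ (componentwise, with ∞ largest), then h ≥ l and μ_1 ≤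 ρ_l + 1. -/
/-! Adding the missing vertex `0` to the facet `F` leaves `Γ^{μ,c}(I)`, so `x^ν ∈ I ⊆ Q_ρ` for
`ν = μ ∖ (c + e_{[s]∖(F ∪ {0})})`. Lowering `c + e_{[s]∖F}` in its first coordinate only moves
the boundary of the first block, so `ν` agrees with `μ'` except at `h`, where `μ'_h = μ_1 - 1`.
Membership in `Q_ρ` forces `ν_t > ρ_t` for some `t`, and `μ' ≤ ρ` leaves only `t = h`. Hence
`ρ_h` is finite and at least `μ_1 - 1`, which gives both `h ≥ l` and `μ_1 ≤ ρ_l + 1`. -/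

open scoped BigOperators

noncomputable section
open Classical

/-! ## Extended partitions in `P_n^∞` and the dual generators of an `S_n`-invariant
monomial ideal -/

section ExtendedPartitions

variable (K : Type) [Field K] (n : ℕ)

section Blocks

variable {s : ℕ} {d p : ℕ → ℕ} {i : ℕ}

lemma blkOf_eq_zero_of_lt (hi : i < p 0) : blkOf p s i = 0 := by
  refine Finset.card_eq_zero.2 (Finset.filter_eq_empty_iff.2 fun k _ hk => ?_)
  have : p 0 ≤ cumsum p (k + 1) :=
    Finset.single_le_sum (fun j _ => Nat.zero_le (p j)) (Finset.mem_range.2 k.succ_pos)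
  omega

lemma blkOf_ne_zero_of_le (hs : 0 < s) (hi : p 0 ≤ i) : blkOf p s i ≠ 0 :=
  (Finset.card_pos.2 ⟨0, Finset.mem_filter.2 ⟨Finset.mem_range.2 hs, by simpa [cumsum]⟩⟩).ne'

lemma muOf_of_lt (hs : 0 < s) (hi : i < p 0) : muOf s d p i = d 0 := by
  simp [muOf, blkOf_eq_zero_of_lt hi, hs]

lemma muMinus_of_lt (cf : ℕ → ℕ) (hs : 0 < s) (hi : i < p 0) :
    muMinus s d p cf i = if p 0 - cf 0 ≤ i then d 0 - 1 else d 0 := by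
  simp [muMinus, blkOf_eq_zero_of_lt hi, hs, cumsum]

lemma muMinus_of_lt_sub (cf : ℕ → ℕ) (hs : 0 < s) (hi : i < p 0 - cf 0) :
    muMinus s d p cf i = d 0 := by
  rw [muMinus_of_lt cf hs (by omega), if_neg (by omega)]

lemma muMinus_first_boundary (cf : ℕ → ℕ) (hs : 0 < s) (hcf : 0 < cf 0) (hcfp : cf 0 ≤ p 0) :
    muMinus s d p cf (p 0 - cf 0) = d 0 - 1 := by
  rw [muMinus_of_lt cf hs (by omega), if_pos le_rfl]

lemma muMinus_congr_of_le {cf cf' : ℕ → ℕ} (hcf : ∀ k ≠ 0, cf k = cf' k) (hi : p 0 ≤ i) :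
    muMinus s d p cf i = muMinus s d p cf' i := by
  unfold muMinus
  by_cases hb : blkOf p s i < s
  · rw [hcf _ (blkOf_ne_zero_of_le (by omega) hi)]
  · simp only [hb, if_false]

lemma muMinus_eq_of_ne {cf cf' : ℕ → ℕ} (hs : 0 < s) (hcf0 : cf 0 = cf' 0 + 1)
    (hcf : ∀ k ≠ 0, cf' k = cf k) (hi : i ≠ p 0 - cf 0) :
    muMinus s d p cf' i = muMinus s d p cf i := by
  rcases lt_or_ge i (p 0) with hip | hip
  · rw [muMinus_of_lt cf' hs hip, muMinus_of_lt cf hs hip]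
    congr 1
    apply propext
    omega
  · exact muMinus_congr_of_le hcf hip

end Blocks

section DualGenerators

variable {K : Type} [Field K] {n : ℕ}

lemma Qgen_le_span_X_pow (ρ : Fin n → ℕ∞) :
    Qgen K n ρ ≤
      Ideal.span {g | ∃ i : Fin n, ρ i ≠ ⊤ ∧ g = MvPolynomial.X i ^ ((ρ i).toNat + 1)} := by
  refine (iInf_le _ (1 : Equiv.Perm (Fin n))).trans ?_
  simp [MvPolynomial.rename_id]

lemma exists_lt_of_mon_mem_Qgen {ρ : Fin n → ℕ∞} {a : Fin n → ℕ}
    (ha : mon K n a ∈ Qgen K n ρ) : ∃ i, ρ i < a i := by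
  have hset : {g : MvPolynomial (Fin n) K |
        ∃ i : Fin n, ρ i ≠ ⊤ ∧ g = MvPolynomial.X i ^ ((ρ i).toNat + 1)}
      = (fun e => MvPolynomial.monomial e (1 : K)) ''
        {e | ∃ i : Fin n, ρ i ≠ ⊤ ∧ e = Finsupp.single i ((ρ i).toNat + 1)} := by
    ext g
    constructor
    · rintro ⟨i, hi, rfl⟩
      exact ⟨_, ⟨i, hi, rfl⟩, MvPolynomial.X_pow_eq_monomial.symm⟩
    · rintro ⟨e, ⟨i, hi, rfl⟩, rfl⟩
      exact ⟨i, hi, MvPolynomial.X_pow_eq_monomial.symm⟩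
  have hspan := Qgen_le_span_X_pow ρ ha
  rw [hset, MvPolynomial.mem_ideal_span_monomial_image] at hspan
  obtain ⟨_, ⟨i, hi, rfl⟩, hle⟩ := hspan (Finsupp.equivFunOnFinite.symm a)
    (by simp [mon, MvPolynomial.support_monomial])
  refine ⟨i, ?_⟩
  rw [← ENat.natCast_toNat hi, Nat.cast_lt]
  simpa using Finsupp.single_le_iff.1 hle

lemma IsDualPresentation.le_Qgen {I : Ideal (MvPolynomial (Fin n) K)}
    {Λ : Finset (Fin n → ℕ∞)} (hΛ : IsDualPresentation K n I Λ) {ρ : Fin n → ℕ∞} (hρ : ρ ∈ Λ) :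
    I ≤ Qgen K n ρ :=
  hΛ.2.1 ▸ biInf_le _ hρ

lemma lt_of_mon_mem_Qgen_of_le {ρ : Fin n → ℕ∞} {a b : Fin n → ℕ} {j : Fin n}
    (hb : mon K n b ∈ Qgen K n ρ) (ha : ∀ t, (a t : ℕ∞) ≤ ρ t) (hab : ∀ t ≠ j, b t ≤ a t) :
    ρ j < b j := by
  obtain ⟨t, ht⟩ := exists_lt_of_mon_mem_Qgen hb
  obtain rfl : t = j := by
    by_contra htj
    exact (ha t).not_gt (ht.trans_le (Nat.cast_le.2 (hab t htj)))
  exact ht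

lemma ellInf_le_of_ne_top {ρ : Fin n → ℕ∞} (hρ : Antitone ρ) {t : Fin n} (ht : ρ t ≠ ⊤) :
    ellInf n ρ ≤ t := by
  calc ellInf n ρ ≤ (Finset.Iio t).card := by
        refine Finset.card_le_card fun i hi => Finset.mem_Iio.2 (not_le.1 fun hti => ht ?_)
        exact top_le_iff.1 ((Finset.mem_filter.1 hi).2 ▸ hρ hti)
    _ = t := Fin.card_Iio t

end DualGenerators

lemma mon_insert_mem_of_facet {K : Type} [Field K] {n : ℕ} {I : Ideal (MvPolynomial (Fin n) K)}
    {s : ℕ} {d p c : ℕ → ℕ} {F : Finset ℕ} (hF : F ∈ GammaCx K n I s d p c)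
    (hfacet : ∀ G ∈ GammaCx K n I s d p c, F ⊆ G → G = F) {v : ℕ} (hv : v < s) (hvF : v ∉ F) :
    mon K n (fun i => muMinus s d p
      (fun j => c j + (if j < s ∧ j ∉ insert v F then 1 else 0)) i.val) ∈ I := by
  by_contra hnot
  have hG := hfacet (insert v F)
    ⟨Finset.insert_subset (Finset.mem_range.2 hv) hF.1, hnot⟩ (Finset.subset_insert v F)
  exact hvF (hG ▸ Finset.mem_insert_self v F)

/-- Indices are 0-based: vertex `0` of `Γ^{μ,c}(I)` is the paper's vertex `1`, the position
`h` is 0-based (so `h ≥ l` reads `ellInf n ρ ≤ h`), and `ρ_l = topVal n ρ`. -/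
theorem statement_11_general (K : Type) [Field K] (n : ℕ) (I : Ideal (MvPolynomial (Fin n) K))
    (Λ : Finset (Fin n → ℕ∞)) (hpres : IsDualPresentation K n I Λ)
    (s : ℕ) (d p : ℕ → ℕ)
    (hdpos : ∀ k, k < s → 0 < d k)
    (c : ℕ → ℕ) (hc : ∀ k, k < s → c k + 1 ≤ p k)
    (F : Finset ℕ)
    (hF : F ∈ GammaCx K n I s d p c)
    (hfacet : ∀ G ∈ GammaCx K n I s d p c, F ⊆ G → G = F)
    (h0F : 0 ∉ F)
    (μ' : Fin n → ℕ)
    (hμ' : μ' = fun t => muMinus s d p (fun j => c j + (if j < s ∧ j ∉ F then 1 else 0)) t.val)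
    (h : Fin n) (hh1 : μ' h ≠ muOf s d p 0) (hh2 : ∀ t : Fin n, t < h → μ' t = muOf s d p 0)
    (ρ : Fin n → ℕ∞) (hρΛ : ρ ∈ Λ)
    (hle : ∀ t : Fin n, ((μ' t : ℕ) : ℕ∞) ≤ ρ t) :
    ellInf n ρ ≤ (h : ℕ) ∧ muOf s d p 0 ≤ topVal n ρ + 1 := by
  subst hμ'
  have hs : 0 < s := Nat.pos_of_ne_zero fun hs => hh1 (by simp [hs, muMinus, muOf])
  set cf := fun j => c j + if j < s ∧ j ∉ F then 1 else 0
  set cf' := fun j => c j + if j < s ∧ j ∉ insert 0 F then 1 else 0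
  have hcf0 : cf 0 = c 0 + 1 := by simp [cf, hs, h0F]
  have hcf : ∀ k ≠ 0, cf' k = cf k := fun k hk => by simp [cf, cf', hk]
  have hc0 := hc 0 hs
  have hd0 := hdpos 0 hs
  rw [muOf_of_lt hs (by omega)] at hh1 hh2 ⊢
  have hμ'h : muMinus s d p cf (p 0 - cf 0) = d 0 - 1 :=
    muMinus_first_boundary cf hs (by omega) (by omega)
  have hhval : (h : ℕ) = p 0 - cf 0 := by
    refine le_antisymm (not_lt.1 fun hlt => ?_) (not_lt.1 fun hlt => hh1 ?_)
    · have hboundary := hh2 ⟨p 0 - cf 0, hlt.trans h.2⟩ hlt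
      simp only [hμ'h] at hboundary
      omega
    · exact muMinus_of_lt_sub cf hs hlt
  have hνh : ρ h < (muMinus s d p cf' h : ℕ∞) :=
    lt_of_mon_mem_Qgen_of_le (hpres.le_Qgen hρΛ (mon_insert_mem_of_facet hF hfacet hs h0F)) hle
      fun t ht => (muMinus_eq_of_ne hs (by simp [cf', hcf0]) hcf (by omega)).le
  have hρh := hle h
  simp only [hhval, hμ'h] at hρh
  refine ⟨ellInf_le_of_ne_top (hpres.1 ρ hρΛ) hνh.ne_top, ?_⟩
  have htop : (ρ h).toNat ≤ topVal n ρ := Finset.le_sup (f := fun i => (ρ i).toNat) (Finset.mem_univ h)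
  rw [← ENat.natCast_toNat hνh.ne_top, Nat.cast_le] at hρh
  omega

/-- Let `I` be a nonzero, proper `S_n`-invariant monomial ideal,
`μ = (d_1^{p_1}, …, d_s^{p_s}, 0^{p_{s+1}}) ∈ P_n` with `d_1 > ⋯ > d_s > 0`, and
`c ≤ p(μ)`.  Let `F` be a facet of `Γ^{μ,c}(I)` not containing the first vertex, let
`μ' = μ ∖ (c + e_{[s]∖F})` and let `h` be the least index with `μ'_h ≠ μ_1`.  If
`ρ = (∞, …, ∞, ρ_l, …, ρ_n) ∈ Λ*(I)` (with `ρ_l ≠ ∞`) satisfies `μ' ≤ ρ`, then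
`h ≥ l` (i.e. `ℓ(ρ) ≤ h` with 0-indexed `h`) and `μ_1 ≤ ρ_l + 1`.
(Vertices of `Γ^{μ,c}(I)` are `0, …, s-1`, vertex `0` being the paper's vertex `1`;
positions in `μ` are `0`-indexed, and `ρ_l = topVal ρ` is the largest finite entry.) -/
theorem statement_11 (K : Type) [Field K] (n : ℕ) (I : Ideal (MvPolynomial (Fin n) K))
    (hmon : IsMonomialIdeal K n I) (hsym : IsSymmetricIdeal K n I)
    (hne : I ≠ ⊥) (hproper : I ≠ ⊤)
    (Λ : Finset (Fin n → ℕ∞)) (hpres : IsDualPresentation K n I Λ)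
    (s : ℕ) (d p : ℕ → ℕ)
    (hn : n = cumsum p (s + 1))
    (hd : ∀ k, k + 1 < s → d (k + 1) < d k)
    (hdpos : ∀ k, k < s → 0 < d k)
    (hppos : ∀ k, k < s → 0 < p k)
    (c : ℕ → ℕ) (hc : ∀ k, k < s → c k + 1 ≤ p k)
    (F : Finset ℕ)
    (hF : F ∈ GammaCx K n I s d p c)
    (hfacet : ∀ G ∈ GammaCx K n I s d p c, F ⊆ G → G = F)
    (h0F : 0 ∉ F)
    (μ' : Fin n → ℕ)
    (hμ' : μ' = fun t => muMinus s d p (fun j => c j + (if j < s ∧ j ∉ F then 1 else 0)) t.val)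
    (h : Fin n) (hh1 : μ' h ≠ muOf s d p 0) (hh2 : ∀ t : Fin n, t < h → μ' t = muOf s d p 0)
    (ρ : Fin n → ℕ∞) (hρΛ : ρ ∈ Λ) (hfin : ∃ t, ρ t ≠ ⊤)
    (hle : ∀ t : Fin n, ((μ' t : ℕ) : ℕ∞) ≤ ρ t) :
    ellInf n ρ ≤ (h : ℕ) ∧ muOf s d p 0 ≤ topVal n ρ + 1 :=
  statement_11_general K n I Λ hpres s d p hdpos c hc F hF hfacet h0F μ' hμ' h hh1 hh2 ρ hρΛ hle
end ExtendedPartitions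
end
end

section
/- Let I ⊆ R be a monomial ideal, F_• a minimal Z^n-graded free resolution of R/I, and F_•^∨ = Hom_R(F_•,R) with differentials ∂^i : F_i^∨ → F_{i+1}^∨. If Ext^i(R/I,R)_{−λ} ≠ 0 for some λ ∈ Z^n, then there exist an integer k ≥ 0, μ ∈ Z^n with μ ≥ λ componentwise and |μ| − |λ| ≥ k, and a minimal generator m of F_{i+k}^∨ of degree −μ with ∂^{i+k}(m) = 0; in particular Ext^{i+k}(R/I,R)_{−μ} ≠ 0. Moreover, if I is S_n-invariant, λ ∈ P_n, and (i,λ) is Ext-extremal, then every non-zero class in Ext^i(R/I,R)_{−λ} is represented by a cycle that is a minimal generator of F_i^∨. -/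
open scoped BigOperators

noncomputable section
open Classical

/-! ## Minimal multigraded free resolutions and `Ext^i(R/I, R)` -/

section Resolution

variable (K : Type) [Field K] (n : ℕ)

/-- `f` is homogeneous of multidegree `δ ∈ ℤ^n` (the zero polynomial is homogeneous of
every degree). -/
def IsHomogZ (f : MvPolynomial (Fin n) K) (δ : Fin n → ℤ) : Prop :=
  ∀ m ∈ f.support, ∀ j, (m j : ℤ) = δ j

/-- The linear map given by a matrix `T` (with possibly infinitely many columns):
`(matApply T) v = fun b => ∑ a, T a b * v a`. -/
noncomputable def matApply {α β : Type} [Fintype α]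
    (T : α → β → MvPolynomial (Fin n) K) :
    (α → MvPolynomial (Fin n) K) →ₗ[MvPolynomial (Fin n) K]
      (β → MvPolynomial (Fin n) K) where
  toFun v := fun b => ∑ a, T a b * v a
  map_add' v w := by
    funext b
    simp [mul_add, Finset.sum_add_distrib]
  map_smul' r v := by
    funext b
    simp only [Pi.smul_apply, smul_eq_mul, RingHom.id_apply, Finset.mul_sum]
    exact Finset.sum_congr rfl fun a _ => by ring

variable (B : ℕ → Type) [∀ i, Fintype (B i)]
variable (Mtx : ∀ i, B (i + 1) → B i → MvPolynomial (Fin n) K)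

/-- The differential `d_i : F_{i+1} → F_i` of the free resolution, where `F_i` is free
on the basis `B i` and `d(e_b) = Σ_c (Mtx i b c) e_c`. -/
noncomputable def resD (i : ℕ) :
    (B (i + 1) → MvPolynomial (Fin n) K) →ₗ[MvPolynomial (Fin n) K]
      (B i → MvPolynomial (Fin n) K) :=
  matApply K n (Mtx i)

/-- The dual differential `∂^i : F_i^∨ → F_{i+1}^∨`, `(∂ z) b = Σ_c (Mtx i b c) * z c`
(in the dual bases `e_b^*`). -/
noncomputable def dualD (i : ℕ) :
    (B i → MvPolynomial (Fin n) K) →ₗ[MvPolynomial (Fin n) K]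
      (B (i + 1) → MvPolynomial (Fin n) K) :=
  matApply K n (fun (c : B i) (b : B (i + 1)) => Mtx i b c)

/-- The submodule of boundaries in `F_i^∨` (zero for `i = 0`). -/
noncomputable def dualBd :
    (i : ℕ) → Submodule (MvPolynomial (Fin n) K) (B i → MvPolynomial (Fin n) K)
  | 0 => ⊥
  | (i + 1) => LinearMap.range (dualD K n B Mtx i)

/-- The augmentation `F_0 → R`, `v ↦ Σ_b (aug b) * v b`. -/
noncomputable def augLin (aug : B 0 → MvPolynomial (Fin n) K) :
    (B 0 → MvPolynomial (Fin n) K) →ₗ[MvPolynomial (Fin n) K] MvPolynomial (Fin n) K :=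
  (LinearMap.proj (R := MvPolynomial (Fin n) K) (φ := fun _ : Unit => MvPolynomial (Fin n) K) ()) ∘ₗ
    matApply K n (fun b (_ : Unit) => aug b)

/-- The maximal graded ideal `m = (x_1, …, x_n)`. -/
def mIdeal : Ideal (MvPolynomial (Fin n) K) :=
  Ideal.span (Set.range MvPolynomial.X)

/-- The data `(B, dg, Mtx, aug)` is a minimal `ℤ^n`-graded free resolution of `R/I`:
each `F_i` is free with finite basis `B i`, with `deg e_b = dg i b`; the differentials
are homogeneous, minimal (entries in `m`), and the complex
`⋯ → F_1 → F_0 → R/I → 0` is exact. -/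
def IsMinimalFreeResolution (I : Ideal (MvPolynomial (Fin n) K))
    (dg : ∀ i, B i → Fin n → ℤ) (aug : B 0 → MvPolynomial (Fin n) K) : Prop :=
  (∀ i b c, IsHomogZ K n (Mtx i b c) (fun j => dg (i + 1) b j - dg i c j)) ∧
  (∀ b, IsHomogZ K n (aug b) (fun j => dg 0 b j)) ∧
  (∀ i b c, MvPolynomial.coeff 0 (Mtx i b c) = 0) ∧
  (∀ f : MvPolynomial (Fin n) K, ∃ v, f - augLin K n B aug v ∈ I) ∧
  (∀ v, augLin K n B aug v ∈ I ↔ v ∈ LinearMap.range (resD K n B Mtx 0)) ∧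
  (∀ i, LinearMap.ker (resD K n B Mtx i) = LinearMap.range (resD K n B Mtx (i + 1)))

/-- `Ext^i(R/I, R)_{-a} ≠ 0` (for `a ∈ ℤ^n`), computed from the dual of the resolution:
there is a homogeneous cycle of multidegree `-a` in `F_i^∨` which is not a boundary. -/
def ExtNZ (dg : ∀ i, B i → Fin n → ℤ) (i : ℕ) (a : Fin n → ℤ) : Prop :=
  ∃ z : B i → MvPolynomial (Fin n) K,
    (∀ b, IsHomogZ K n (z b) (fun j => dg i b j - a j)) ∧
    dualD K n B Mtx i z = 0 ∧ z ∉ dualBd K n B Mtx i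

/-- `Ext^i(R/I, R)_{⟨-μ⟩} ≠ 0` for a partition `μ ∈ P_n`. -/
def ExtSymNZ (dg : ∀ i, B i → Fin n → ℤ) (i : ℕ) (μ : Fin n → ℕ) : Prop :=
  ∃ a : Fin n → ℕ, (∃ σ : Equiv.Perm (Fin n), a = μ ∘ σ) ∧
    ExtNZ K n B Mtx dg i (fun t => (a t : ℤ))

/-- `(i, λ) ∈ [n] × P_n` is an Ext-extremal pair: `Ext^i(R/I,R)_{⟨-λ⟩} ≠ 0` and
`Ext^j(R/I,R)_{⟨-μ⟩} = 0` for all `j ≥ i` and partitions `μ ≩ λ` with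
`|μ| - j ≥ |λ| - i`. -/
def IsExtExtremalPair (dg : ∀ i, B i → Fin n → ℤ) (i : ℕ) (l : Fin n → ℕ) : Prop :=
  1 ≤ i ∧ i ≤ n ∧ Antitone l ∧ ExtSymNZ K n B Mtx dg i l ∧
    ∀ (j : ℕ) (μ : Fin n → ℕ), i ≤ j → Antitone μ → (∀ t, l t ≤ μ t) → l ≠ μ →
      ((∑ t, (l t : ℤ)) - i ≤ (∑ t, (μ t : ℤ)) - j) → ¬ ExtSymNZ K n B Mtx dg j μ

/-- The space of homogeneous cycles of multidegree `-a` in `F_i^∨`, as a `K`-subspace. -/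
noncomputable def extZ (dg : ∀ i, B i → Fin n → ℤ) (i : ℕ) (a : Fin n → ℤ) :
    Submodule K (B i → MvPolynomial (Fin n) K) where
  carrier := {z | (∀ b, IsHomogZ K n (z b) (fun j => dg i b j - a j)) ∧
    dualD K n B Mtx i z = 0}
  add_mem' := by
    rintro z w ⟨hz1, hz2⟩ ⟨hw1, hw2⟩
    refine ⟨fun b m hm j => ?_, by rw [map_add, hz2, hw2, add_zero]⟩
    have hsub : m ∈ (z b).support ∪ (w b).support :=
      MvPolynomial.support_add (by simpa using hm)
    rcases Finset.mem_union.mp hsub with h | h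
    · exact hz1 b m h j
    · exact hw1 b m h j
  zero_mem' := ⟨fun b m hm j => by simp at hm, map_zero _⟩
  smul_mem' := by
    rintro kk z ⟨hz1, hz2⟩
    constructor
    · intro b m hm j
      apply hz1 b m _ j
      have hmem : m ∈ (kk • z b).support := by simpa using hm
      exact MvPolynomial.support_smul hmem
    · rw [LinearMap.map_smul_of_tower, hz2, smul_zero]

/-- `dim_K Ext^i(R/I, R)_{-a}`: homogeneous cycles modulo homogeneous boundaries. -/
noncomputable def extDim (dg : ∀ i, B i → Fin n → ℤ) (i : ℕ) (a : Fin n → ℤ) : ℕ :=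
  Module.finrank K (extZ K n B Mtx dg i a) -
    Module.finrank K
      ((dualBd K n B Mtx i).restrictScalars K ⊓ extZ K n B Mtx dg i a : Submodule K _)

end Resolution

set_option linter.unusedSectionVars false
set_option linter.unusedVariables false
set_option maxHeartbeats 1000000

namespace St16
variable {K : Type} [Field K] {n : ℕ}

def Jdl (K : Type) [Field K] (n r : ℕ) : Ideal (MvPolynomial (Fin n) K) :=
  Ideal.span (MvPolynomial.X '' {s : Fin n | s.val < r})

lemma memJ {p : MvPolynomial (Fin n) K} {r : ℕ} :
    p ∈ Jdl K n r ↔ ∀ m ∈ p.support, ∃ s : Fin n, s.val < r ∧ m s ≠ 0 := by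
  rw [Jdl, MvPolynomial.mem_ideal_span_X_image]
  simp [Set.mem_setOf_eq]

lemma Jdl_mono {r r' : ℕ} (h : r ≤ r') : Jdl K n r ≤ Jdl K n r' := by
  apply Ideal.span_mono
  apply Set.image_mono
  intro s hs; exact lt_of_lt_of_le hs h

lemma Jdl_zero {p : MvPolynomial (Fin n) K} (hp : p ∈ Jdl K n 0) : p = 0 := by
  rw [memJ] at hp
  rw [MvPolynomial.eq_zero_iff]
  intro d
  by_contra hd
  obtain ⟨s, hs, -⟩ := hp d (MvPolynomial.mem_support_iff.mpr hd)
  omega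

/-- cancellation: if `X t * p ∈ (x_1,…,x_r)` and `t ≥ r` then `p ∈ (x_1,…,x_r)`. -/
lemma Jdl_cancel {p : MvPolynomial (Fin n) K} {r : ℕ} {t : Fin n} (ht : r ≤ t.val)
    (h : MvPolynomial.X t * p ∈ Jdl K n r) : p ∈ Jdl K n r := by
  rw [memJ] at h ⊢
  intro m hm
  have hmem : (Finsupp.single t 1 + m) ∈ (MvPolynomial.X t * p).support := by
    rw [MvPolynomial.mem_support_iff, MvPolynomial.coeff_X_mul]
    exact MvPolynomial.mem_support_iff.mp hm
  obtain ⟨s, hs, hns⟩ := h _ hmem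
  refine ⟨s, hs, ?_⟩
  have hst : s ≠ t := by rintro rfl; omega
  simpa [Finsupp.single_apply, hst.symm] using hns

/-- exponent vector of an integer degree vector -/
def expv (n : ℕ) (δ : Fin n → ℤ) : Fin n →₀ ℕ :=
  Finsupp.equivFunOnFinite.symm (fun t => (δ t).toNat)

@[simp] lemma expv_apply (δ : Fin n → ℤ) (t : Fin n) : expv n δ t = (δ t).toNat := rfl

lemma homog_eq_monomial {f : MvPolynomial (Fin n) K} {δ : Fin n → ℤ}
    (hf : IsHomogZ K n f δ) :
    f = MvPolynomial.monomial (expv n δ) (MvPolynomial.coeff (expv n δ) f) := by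
  ext d
  rw [MvPolynomial.coeff_monomial]
  by_cases hd : d = expv n δ
  · simp [hd]
  · rw [if_neg (fun h => hd h.symm)]
    by_contra hc
    have hds : d ∈ f.support := MvPolynomial.mem_support_iff.mpr hc
    have := hf d hds
    apply hd
    ext t
    have h1 := this t
    simp only [expv_apply]
    omega

lemma homog_nonneg {f : MvPolynomial (Fin n) K} {δ : Fin n → ℤ}
    (hf : IsHomogZ K n f δ) (hne : f ≠ 0) : ∀ t, 0 ≤ δ t := by
  intro t
  obtain ⟨d, hd⟩ := (MvPolynomial.support_nonempty.mpr hne)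
  have := hf d hd t
  omega

lemma homog_zero_of_neg {f : MvPolynomial (Fin n) K} {δ : Fin n → ℤ}
    (hf : IsHomogZ K n f δ) {t : Fin n} (ht : δ t < 0) : f = 0 := by
  by_contra hne
  exact absurd (homog_nonneg hf hne t) (by omega)

lemma homog_monomial {δ : Fin n → ℤ} (hδ : ∀ t, 0 ≤ δ t) (c : K) :
    IsHomogZ K n (MvPolynomial.monomial (expv n δ) c) δ := by
  intro m hm j
  have := MvPolynomial.support_monomial_subset hm
  simp only [Finset.mem_singleton] at this
  subst this
  simp only [expv_apply]
  have := hδ j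
  omega

lemma homog_zero {δ : Fin n → ℤ} : IsHomogZ K n (0 : MvPolynomial (Fin n) K) δ := by
  intro m hm; simp at hm

lemma homog_add {f g : MvPolynomial (Fin n) K} {δ : Fin n → ℤ}
    (hf : IsHomogZ K n f δ) (hg : IsHomogZ K n g δ) : IsHomogZ K n (f + g) δ := by
  intro m hm
  rcases Finset.mem_union.mp (MvPolynomial.support_add hm) with h | h
  · exact hf m h
  · exact hg m h

lemma homog_sub {f g : MvPolynomial (Fin n) K} {δ : Fin n → ℤ}
    (hf : IsHomogZ K n f δ) (hg : IsHomogZ K n g δ) : IsHomogZ K n (f - g) δ := by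
  intro m hm
  have : (f - g).support ⊆ f.support ∪ g.support := by
    intro d hd
    by_contra hc
    simp only [Finset.mem_union, MvPolynomial.mem_support_iff, not_or, not_not] at hc
    rw [MvPolynomial.mem_support_iff, MvPolynomial.coeff_sub, hc.1, hc.2] at hd
    simp at hd
  rcases Finset.mem_union.mp (this hm) with h | h
  · exact hf m h
  · exact hg m h

lemma homog_sum {α : Type} [Fintype α] {f : α → MvPolynomial (Fin n) K} {δ : Fin n → ℤ}
    (hf : ∀ a, IsHomogZ K n (f a) δ) : IsHomogZ K n (∑ a, f a) δ := by
  classical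
  induction (Finset.univ : Finset α) using Finset.induction_on with
  | empty => simpa using (homog_zero (K := K) (n := n) (δ := δ))
  | @insert a s hx ih =>
      rw [Finset.sum_insert hx]
      exact homog_add (hf _) ih

lemma homog_mul {f g : MvPolynomial (Fin n) K} {δ ε : Fin n → ℤ}
    (hf : IsHomogZ K n f δ) (hg : IsHomogZ K n g ε) :
    IsHomogZ K n (f * g) (fun t => δ t + ε t) := by
  intro m hm j
  have hsub := MvPolynomial.support_mul f g hm
  rw [Finset.mem_add] at hsub
  obtain ⟨a, ha, b, hb, rfl⟩ := hsub
  have h1 := hf a ha j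
  have h2 := hg b hb j
  simp only [Finsupp.coe_add, Pi.add_apply]
  push_cast
  omega

/-- the homogeneous component of `p` in (potential) degree `δ` -/
def Pcomp (δ : Fin n → ℤ) (p : MvPolynomial (Fin n) K) : MvPolynomial (Fin n) K :=
  if ∀ t, 0 ≤ δ t then MvPolynomial.monomial (expv n δ) (MvPolynomial.coeff (expv n δ) p) else 0

lemma Pcomp_homog (δ : Fin n → ℤ) (p : MvPolynomial (Fin n) K) :
    IsHomogZ K n (Pcomp δ p) δ := by
  rw [Pcomp]
  split_ifs with h
  · exact homog_monomial h _
  · exact homog_zero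

lemma Pcomp_of_homog {δ : Fin n → ℤ} {p : MvPolynomial (Fin n) K}
    (hp : IsHomogZ K n p δ) : Pcomp δ p = p := by
  rw [Pcomp]
  split_ifs with h
  · exact (homog_eq_monomial hp).symm
  · by_contra hc
    push_neg at h
    obtain ⟨t, ht⟩ := h
    exact hc (homog_zero_of_neg hp ht).symm

lemma Pcomp_add (δ : Fin n → ℤ) (p q : MvPolynomial (Fin n) K) :
    Pcomp δ (p + q) = Pcomp δ p + Pcomp δ q := by
  rw [Pcomp, Pcomp, Pcomp]
  split_ifs with h
  · rw [MvPolynomial.coeff_add, map_add]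
  · simp

lemma Pcomp_zero (δ : Fin n → ℤ) : Pcomp δ (0 : MvPolynomial (Fin n) K) = 0 := by
  rw [Pcomp]; split_ifs <;> simp

lemma Pcomp_sum {α : Type} [Fintype α] (δ : Fin n → ℤ) (f : α → MvPolynomial (Fin n) K) :
    Pcomp δ (∑ a, f a) = ∑ a, Pcomp δ (f a) := by
  classical
  induction (Finset.univ : Finset α) using Finset.induction_on with
  | empty => simpa using Pcomp_zero (K := K) δ
  | @insert a s hx ih => rw [Finset.sum_insert hx, Finset.sum_insert hx, Pcomp_add, ih]

lemma Pcomp_mem_J {δ : Fin n → ℤ} {p : MvPolynomial (Fin n) K} {r : ℕ}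
    (hp : p ∈ Jdl K n r) : Pcomp δ p ∈ Jdl K n r := by
  rw [memJ] at hp ⊢
  intro m hm
  rw [Pcomp] at hm
  split_ifs at hm with h
  · have hsub := MvPolynomial.support_monomial_subset hm
    simp only [Finset.mem_singleton] at hsub
    subst hsub
    have hc : MvPolynomial.coeff (expv n δ) p ≠ 0 := by
      intro hz
      rw [hz] at hm
      simp at hm
    exact hp _ (MvPolynomial.mem_support_iff.mpr hc)
  · simp at hm

/-- key commutation: extracting the degree-`δ` component of `g * p` for `g` homogeneous
of degree `ε` -/
lemma Pcomp_homog_mul {g p : MvPolynomial (Fin n) K} {ε : Fin n → ℤ}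
    (hg : IsHomogZ K n g ε) (δ : Fin n → ℤ) :
    Pcomp δ (g * p) = g * Pcomp (fun t => δ t - ε t) p := by
  by_cases hgz : g = 0
  · simp [hgz, Pcomp_zero]
  have hε : ∀ t, 0 ≤ ε t := homog_nonneg hg hgz
  have hgm := homog_eq_monomial hg
  rw [Pcomp, Pcomp]
  by_cases h1 : ∀ t, 0 ≤ δ t
  · rw [if_pos h1]
    by_cases h2 : ∀ t, 0 ≤ δ t - ε t
    · rw [if_pos h2]
      have hle : expv n ε ≤ expv n δ := by
        intro t
        simp only [expv_apply]
        have := hε t; have := h1 t; have := h2 t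
        omega
      have hexp2 : expv n δ - expv n ε = expv n (fun t => δ t - ε t) := by
        ext t
        simp only [Finsupp.coe_tsub, Pi.sub_apply, expv_apply]
        have := hε t; have := h1 t; have := h2 t
        omega
      have hexp : expv n ε + expv n (fun t => δ t - ε t) = expv n δ := by
        ext t
        simp only [Finsupp.coe_add, Pi.add_apply, expv_apply]
        have := hε t; have := h1 t; have := h2 t
        omega
      conv_lhs => rw [hgm]
      rw [MvPolynomial.coeff_monomial_mul' (expv n δ) (expv n ε) _ p, if_pos hle, hexp2]
      conv_rhs => rw [hgm]
      rw [MvPolynomial.monomial_mul, hexp]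
    · rw [if_neg h2, mul_zero]
      push_neg at h2
      obtain ⟨t, ht⟩ := h2
      have hnle : ¬ expv n ε ≤ expv n δ := by
        intro hle
        have := hle t
        simp only [expv_apply] at this
        have := hε t; have := h1 t
        omega
      conv_lhs => rw [hgm]
      rw [MvPolynomial.coeff_monomial_mul' (expv n δ) (expv n ε) _ p, if_neg hnle]
      exact map_zero _
  · rw [if_neg h1]
    by_cases h2 : ∀ t, 0 ≤ δ t - ε t
    · push_neg at h1
      obtain ⟨t, ht⟩ := h1
      have : ε t < 0 := by have := h2 t; omega
      exact absurd (hε t) (by omega)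
    · rw [if_neg h2, mul_zero]

end St16

namespace St16
variable {K : Type} [Field K] {n : ℕ} {B : ℕ → Type} [∀ i, Fintype (B i)]
variable {Mtx : ∀ i, B (i + 1) → B i → MvPolynomial (Fin n) K}
variable {dg : ∀ i, B i → Fin n → ℤ}

lemma dualD_apply (j : ℕ) (v : B j → MvPolynomial (Fin n) K) (b : B (j+1)) :
    dualD K n B Mtx j v b = ∑ c, Mtx j b c * v c := rfl

lemma resD_apply (j : ℕ) (v : B (j+1) → MvPolynomial (Fin n) K) (c : B j) :
    resD K n B Mtx j v c = ∑ b, Mtx j b c * v b := rfl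

@[simp] lemma dualBd_succ (j : ℕ) :
    dualBd K n B Mtx (j+1) = LinearMap.range (dualD K n B Mtx j) := rfl

/-- homogeneity of degree functions is extensional -/
lemma homog_ext {f : MvPolynomial (Fin n) K} {δ δ' : Fin n → ℤ}
    (h : ∀ t, δ t = δ' t) (hf : IsHomogZ K n f δ) : IsHomogZ K n f δ' := by
  intro m hm t
  rw [← h t]
  exact hf m hm t

/-- homogeneous vectors of multidegree `-ν` in `F_j^∨` -/
def Hv (dg : ∀ i, B i → Fin n → ℤ) (j : ℕ) (ν : Fin n → ℤ)
    (v : B j → MvPolynomial (Fin n) K) : Prop :=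
  ∀ b, IsHomogZ K n (v b) (fun t => dg j b t - ν t)

lemma Hv_ext {j : ℕ} {ν ν' : Fin n → ℤ} {v : B j → MvPolynomial (Fin n) K}
    (h : ∀ t, ν t = ν' t) (hv : Hv dg j ν v) : Hv dg j ν' v :=
  fun b => homog_ext (fun t => by rw [h t]) (hv b)

lemma Hv_zero {j : ℕ} {ν : Fin n → ℤ} : Hv dg j ν (0 : B j → MvPolynomial (Fin n) K) :=
  fun _ => homog_zero

lemma Hv_add {j : ℕ} {ν : Fin n → ℤ} {v w : B j → MvPolynomial (Fin n) K}
    (hv : Hv dg j ν v) (hw : Hv dg j ν w) : Hv dg j ν (v + w) :=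
  fun b => homog_add (hv b) (hw b)

lemma Hv_sub {j : ℕ} {ν : Fin n → ℤ} {v w : B j → MvPolynomial (Fin n) K}
    (hv : Hv dg j ν v) (hw : Hv dg j ν w) : Hv dg j ν (v - w) :=
  fun b => homog_sub (hv b) (hw b)

lemma homog_X (t : Fin n) :
    IsHomogZ K n (MvPolynomial.X t : MvPolynomial (Fin n) K)
      (fun s => if s = t then (1 : ℤ) else 0) := by
  intro m hm s
  rw [MvPolynomial.support_X] at hm
  simp only [Finset.mem_singleton] at hm
  subst hm
  simp [Finsupp.single_apply, eq_comm]

lemma Hv_smulX {j : ℕ} {ν : Fin n → ℤ} {t : Fin n} {q : B j → MvPolynomial (Fin n) K}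
    (hq : Hv dg j (fun s => ν s + if s = t then 1 else 0) q) :
    Hv dg j ν ((MvPolynomial.X t : MvPolynomial (Fin n) K) • q) := by
  intro b
  have := homog_mul (homog_X (K := K) (n := n) t) (hq b)
  refine homog_ext (fun s => ?_) this
  by_cases h : s = t <;> simp only [h, if_true, if_false] <;> ring

lemma Hv_dualD (hM : ∀ i b c, IsHomogZ K n (Mtx i b c) (fun t => dg (i+1) b t - dg i c t))
    {j : ℕ} {ν : Fin n → ℤ} {v : B j → MvPolynomial (Fin n) K}
    (hv : Hv dg j ν v) : Hv dg (j+1) ν (dualD K n B Mtx j v) := by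
  intro b
  rw [dualD_apply]
  apply homog_sum
  intro c
  have := homog_mul (hM j b c) (hv c)
  exact homog_ext (fun t => by ring) this

lemma XG_dualD {r j : ℕ} {v : B j → MvPolynomial (Fin n) K}
    (hv : ∀ b, v b ∈ Jdl K n r) (b : B (j+1)) :
    dualD K n B Mtx j v b ∈ Jdl K n r := by
  rw [dualD_apply]
  exact Ideal.sum_mem _ (fun c _ => Ideal.mul_mem_left _ _ (hv c))

/-- homogeneous projection of vectors -/
def Pv (dg : ∀ i, B i → Fin n → ℤ) (j : ℕ) (ν : Fin n → ℤ)
    (v : B j → MvPolynomial (Fin n) K) : B j → MvPolynomial (Fin n) K :=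
  fun b => Pcomp (fun t => dg j b t - ν t) (v b)

lemma Hv_Pv {j : ℕ} {ν : Fin n → ℤ} (v : B j → MvPolynomial (Fin n) K) :
    Hv dg j ν (Pv dg j ν v) := fun b => Pcomp_homog _ _

lemma Pv_of_Hv {j : ℕ} {ν : Fin n → ℤ} {v : B j → MvPolynomial (Fin n) K}
    (hv : Hv dg j ν v) : Pv dg j ν v = v := by
  funext b
  exact Pcomp_of_homog (hv b)

lemma Pv_dualD (hM : ∀ i b c, IsHomogZ K n (Mtx i b c) (fun t => dg (i+1) b t - dg i c t))
    {j : ℕ} {ν : Fin n → ℤ} (v : B j → MvPolynomial (Fin n) K) :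
    Pv dg (j+1) ν (dualD K n B Mtx j v) = dualD K n B Mtx j (Pv dg j ν v) := by
  funext b
  rw [Pv, dualD_apply, dualD_apply, Pcomp_sum]
  apply Finset.sum_congr rfl
  intro c _
  rw [Pcomp_homog_mul (hM j b c)]
  have heq : (fun t => dg (j+1) b t - ν t - (dg (j+1) b t - dg j c t))
      = (fun t => dg j c t - ν t) := by funext t; ring
  rw [heq]
  rfl

lemma comp_zero
    (hex : ∀ i, LinearMap.ker (resD K n B Mtx i) = LinearMap.range (resD K n B Mtx (i+1)))
    (j : ℕ) (u : B (j+2) → MvPolynomial (Fin n) K) :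
    resD K n B Mtx j (resD K n B Mtx (j+1) u) = 0 := by
  have : resD K n B Mtx (j+1) u ∈ LinearMap.range (resD K n B Mtx (j+1)) :=
    ⟨u, rfl⟩
  rw [← hex j] at this
  exact this

lemma dd_zero
    (hex : ∀ i, LinearMap.ker (resD K n B Mtx i) = LinearMap.range (resD K n B Mtx (i+1)))
    (j : ℕ) (z : B j → MvPolynomial (Fin n) K) :
    dualD K n B Mtx (j+1) (dualD K n B Mtx j z) = 0 := by
  funext b''
  show ∑ b', Mtx (j+1) b'' b' * (∑ c, Mtx j b' c * z c) = 0
  have hres : ∀ b', resD K n B Mtx (j+1) (Pi.single b'' (1 : MvPolynomial (Fin n) K)) b'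
      = Mtx (j+1) b'' b' := by
    intro b'
    rw [resD_apply, Finset.sum_eq_single b'']
    · simp
    · intro a _ ha
      rw [Pi.single_eq_of_ne ha, mul_zero]
    · intro h
      exact absurd (Finset.mem_univ b'') h
  have hkey : ∀ c, ∑ b', Mtx j b' c * Mtx (j+1) b'' b' = 0 := by
    intro c
    have h0 := comp_zero (Mtx := Mtx) hex j (Pi.single b'' 1)
    have h1 := congrFun h0 c
    rw [resD_apply] at h1
    calc ∑ b', Mtx j b' c * Mtx (j+1) b'' b'
        = ∑ b', Mtx j b' c * resD K n B Mtx (j+1) (Pi.single b'' 1) b' := by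
          exact Finset.sum_congr rfl fun b' _ => by rw [hres b']
      _ = 0 := h1
  calc ∑ b', Mtx (j+1) b'' b' * (∑ c, Mtx j b' c * z c)
      = ∑ b', ∑ c, Mtx (j+1) b'' b' * (Mtx j b' c * z c) := by
        exact Finset.sum_congr rfl fun b' _ => Finset.mul_sum _ _ _
    _ = ∑ c, ∑ b', Mtx (j+1) b'' b' * (Mtx j b' c * z c) := Finset.sum_comm
    _ = ∑ c, (∑ b', Mtx j b' c * Mtx (j+1) b'' b') * z c := by
        refine Finset.sum_congr rfl fun c _ => ?_
        rw [Finset.sum_mul]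
        exact Finset.sum_congr rfl fun b' _ => by ring
    _ = 0 := by
        refine Finset.sum_eq_zero fun c _ => ?_
        rw [hkey c, zero_mul]

/-- splitting a homogeneous element of `(x_1,…,x_{r+1})` into a part in `(x_1,…,x_r)`
and a multiple of `x_{r+1}` -/
lemma spl_comp (t : Fin n) {δ : Fin n → ℤ} {p : MvPolynomial (Fin n) K}
    (hp : IsHomogZ K n p δ) (hpJ : p ∈ Jdl K n (t.val + 1)) :
    ∃ g q : MvPolynomial (Fin n) K, p = g + MvPolynomial.X t * q ∧
      IsHomogZ K n g δ ∧ g ∈ Jdl K n t.val ∧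
      IsHomogZ K n q (fun s => δ s - if s = t then 1 else 0) := by
  by_cases hz : p = 0
  · exact ⟨0, 0, by simp [hz], homog_zero, Ideal.zero_mem _, homog_zero⟩
  have hδ : ∀ s, 0 ≤ δ s := homog_nonneg hp hz
  have hpm := homog_eq_monomial hp
  set c := MvPolynomial.coeff (expv n δ) p with hc
  have hcne : c ≠ 0 := by
    intro h
    rw [h] at hpm
    exact hz (by simpa using hpm)
  have hsupp : p.support = {expv n δ} := by
    conv_lhs => rw [hpm]
    rw [MvPolynomial.support_monomial, if_neg hcne]
  by_cases hcase : ∃ s' : Fin n, s'.val < t.val ∧ expv n δ s' ≠ 0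
  · refine ⟨p, 0, by ring, hp, ?_, homog_zero⟩
    rw [memJ]
    intro m hm
    rw [hsupp, Finset.mem_singleton] at hm
    subst hm
    exact hcase
  · -- the only variable below t+1 dividing p is x_t
    obtain ⟨s, hs, hsne⟩ := memJ.mp hpJ (expv n δ) (by rw [hsupp]; simp)
    have hst : s = t := by
      push_neg at hcase
      by_contra hne
      have : s.val < t.val := by
        have := Fin.val_ne_of_ne hne
        omega
      exact hsne (hcase s this)
    subst hst
    have h1le : Finsupp.single s 1 ≤ expv n δ := by
      rw [Finsupp.single_le_iff]
      omega
    refine ⟨0, MvPolynomial.monomial (expv n δ - Finsupp.single s 1) c, ?_, homog_zero,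
      Ideal.zero_mem _, ?_⟩
    · rw [zero_add, MvPolynomial.X, MvPolynomial.monomial_mul, one_mul,
        add_tsub_cancel_of_le h1le]
      exact hpm
    · intro m hm u
      have hmm := MvPolynomial.support_monomial_subset hm
      simp only [Finset.mem_singleton] at hmm
      subst hmm
      rw [Finsupp.tsub_apply]
      simp only [expv_apply, Finsupp.single_apply]
      have h1 := hδ u
      by_cases hu : u = s
      · rw [if_pos hu.symm, if_pos hu]
        have h2 : (δ u).toNat ≠ 0 := by rw [hu]; exact hsne
        omega
      · rw [if_neg (fun h => hu h.symm), if_neg hu]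
        omega

/-- vector form of the splitting -/
lemma spl_vec {j : ℕ} {ν : Fin n → ℤ} {r : ℕ} (t : Fin n) (ht : t.val = r)
    {v : B j → MvPolynomial (Fin n) K} (hv : Hv dg j ν v)
    (hJ : ∀ b, v b ∈ Jdl K n (r + 1)) :
    ∃ g q : B j → MvPolynomial (Fin n) K,
      v = g + (MvPolynomial.X t : MvPolynomial (Fin n) K) • q ∧
      Hv dg j ν g ∧ (∀ b, g b ∈ Jdl K n r) ∧
      Hv dg j (fun s => ν s + if s = t then 1 else 0) q := by
  have hJ' : ∀ b, v b ∈ Jdl K n (t.val + 1) := by rw [ht]; exact hJ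
  choose g q h1 h2 h3 h4 using fun b => spl_comp t (hv b) (hJ' b)
  refine ⟨g, q, ?_, h2, fun b => by rw [← ht]; exact h3 b, ?_⟩
  · funext b
    simpa using h1 b
  · intro b
    refine homog_ext (fun s => ?_) (h4 b)
    ring

/-- degree vector `ν₀ + c` -/
def nuc (ν₀ : Fin n → ℤ) (c : Fin n → ℕ) : Fin n → ℤ := fun t => ν₀ t + (c t : ℤ)

@[simp] lemma nuc_apply (ν₀ : Fin n → ℤ) (c : Fin n → ℕ) (t : Fin n) :
    nuc ν₀ c t = ν₀ t + (c t : ℤ) := rfl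

lemma X_mul_mem_J (t : Fin n) (p : MvPolynomial (Fin n) K) :
    MvPolynomial.X t * p ∈ Jdl K n (t.val + 1) := by
  rw [memJ]
  intro m hm
  rw [MvPolynomial.support_X_mul] at hm
  obtain ⟨m', _, rfl⟩ := Finset.mem_map.mp hm
  refine ⟨t, Nat.lt_succ_self _, ?_⟩
  simp [addLeftEmbedding_apply, Finsupp.single_apply]

lemma Vlem
    (hM : ∀ i b c, IsHomogZ K n (Mtx i b c) (fun t => dg (i+1) b t - dg i c t))
    (hex : ∀ i, LinearMap.ker (resD K n B Mtx i) = LinearMap.range (resD K n B Mtx (i+1)))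
    (j₀ : ℕ) (ν₀ : Fin n → ℤ)
    (H : ∀ (j : ℕ) (c : Fin n → ℕ), j₀ ≤ j → c ≠ 0 → j - j₀ ≤ ∑ t, c t →
      ∀ w : B j → MvPolynomial (Fin n) K, Hv dg j (nuc ν₀ c) w →
      dualD K n B Mtx j w = 0 → w ∈ dualBd K n B Mtx j) :
    ∀ r : ℕ, r ≤ n → ∀ (j : ℕ) (c : Fin n → ℕ), j₀ ≤ j → c ≠ 0 → j - j₀ ≤ ∑ t, c t →
    ∀ h : B j → MvPolynomial (Fin n) K, Hv dg j (nuc ν₀ c) h →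
    (∀ b, dualD K n B Mtx j h b ∈ Jdl K n r) →
    ∃ w ξ : B j → MvPolynomial (Fin n) K, w ∈ dualBd K n B Mtx j ∧
      Hv dg j (nuc ν₀ c) w ∧ (∀ b, ξ b ∈ Jdl K n r) ∧ h = w + ξ := by
  intro r
  induction r with
  | zero =>
    intro _ j c hj hc hsum h hh hbd
    have hcyc : dualD K n B Mtx j h = 0 := funext fun b => Jdl_zero (hbd b)
    exact ⟨h, 0, H j c hj hc hsum h hh hcyc, hh, fun b => Ideal.zero_mem _, by simp⟩
  | succ r IH =>
    intro hr j c hj hc hsum h hh hbd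
    have hrn : r ≤ n := Nat.le_of_succ_le hr
    set t : Fin n := ⟨r, hr⟩ with ht
    have htv : (t : ℕ) = r := rfl
    have hdh : Hv dg (j+1) (nuc ν₀ c) (dualD K n B Mtx j h) := Hv_dualD hM hh
    obtain ⟨g, q, hsplit, hg, hgJ, hq⟩ := spl_vec t htv hdh hbd
    have hddh : dualD K n B Mtx (j+1) (dualD K n B Mtx j h) = 0 := dd_zero hex j h
    have h0 : dualD K n B Mtx (j+1) g
        + (MvPolynomial.X t : MvPolynomial (Fin n) K) • dualD K n B Mtx (j+1) q = 0 := by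
      rw [← map_smul, ← map_add, ← hsplit]
      exact hddh
    have hqcyc : ∀ b, dualD K n B Mtx (j+1) q b ∈ Jdl K n r := by
      intro b
      have h1 := congrFun h0 b
      simp only [Pi.add_apply, Pi.smul_apply, smul_eq_mul, Pi.zero_apply] at h1
      have h2 : MvPolynomial.X t * dualD K n B Mtx (j+1) q b ∈ Jdl K n r := by
        rw [eq_neg_of_add_eq_zero_right h1]
        exact Submodule.neg_mem _ (XG_dualD hgJ b)
      exact Jdl_cancel (le_of_eq htv.symm) h2
    set c' : Fin n → ℕ := fun s => c s + if s = t then 1 else 0 with hc'def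
    have hc' : c' ≠ 0 := by
      intro h0'
      have := congrFun h0' t
      simp [hc'def] at this
    have hsumc' : ∑ s, c' s = (∑ s, c s) + 1 := by
      rw [hc'def, Finset.sum_add_distrib]
      simp
    have hq' : Hv dg (j+1) (nuc ν₀ c') q := by
      refine Hv_ext (fun s => ?_) hq
      simp only [nuc, hc'def]
      split_ifs <;> push_cast <;> ring
    obtain ⟨w₁, ξ₁, hw₁bd, hw₁h, hξ₁J, hq_eq⟩ :=
      IH hrn (j+1) c' (by omega) hc' (by omega) q hq' hqcyc
    obtain ⟨u₀, hu₀⟩ := hw₁bd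
    set u := Pv dg j (nuc ν₀ c') u₀ with hudef
    have hu_h : Hv dg j (nuc ν₀ c') u := Hv_Pv u₀
    have hdu : dualD K n B Mtx j u = w₁ := by
      rw [hudef, ← Pv_dualD hM, hu₀, Pv_of_Hv hw₁h]
    set h' := h - (MvPolynomial.X t : MvPolynomial (Fin n) K) • u with hh'def
    have hXu_h : Hv dg j (nuc ν₀ c) ((MvPolynomial.X t : MvPolynomial (Fin n) K) • u) := by
      apply Hv_smulX
      refine Hv_ext (fun s => ?_) hu_h
      simp only [nuc, hc'def]
      split_ifs <;> push_cast <;> ring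
    have hh' : Hv dg j (nuc ν₀ c) h' := Hv_sub hh hXu_h
    have hh'bd : ∀ b, dualD K n B Mtx j h' b ∈ Jdl K n r := by
      intro b
      have heq : dualD K n B Mtx j h'
          = g + (MvPolynomial.X t : MvPolynomial (Fin n) K) • ξ₁ := by
        rw [hh'def, map_sub, map_smul, hdu, hsplit, hq_eq, smul_add]
        abel
      rw [heq]
      simp only [Pi.add_apply, Pi.smul_apply, smul_eq_mul]
      exact Ideal.add_mem _ (hgJ b) (Ideal.mul_mem_left _ _ (hξ₁J b))
    obtain ⟨w₂, ξ₂, hw₂bd, hw₂h, hξ₂J, hh'_eq⟩ := IH hrn j c hj hc hsum h' hh' hh'bd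
    refine ⟨w₂, ξ₂ + (MvPolynomial.X t : MvPolynomial (Fin n) K) • u, hw₂bd, hw₂h, ?_, ?_⟩
    · intro b
      simp only [Pi.add_apply, Pi.smul_apply, smul_eq_mul]
      refine Ideal.add_mem _ (Jdl_mono (Nat.le_succ r) (hξ₂J b)) ?_
      have := X_mul_mem_J (K := K) t (u b)
      rwa [htv] at this
    · have hres : h = h' + (MvPolynomial.X t : MvPolynomial (Fin n) K) • u := by
        rw [hh'def]; abel
      rw [hres, hh'_eq]
      abel

lemma bd_cycle
    (hex : ∀ i, LinearMap.ker (resD K n B Mtx i) = LinearMap.range (resD K n B Mtx (i+1)))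
    {j : ℕ} {w : B j → MvPolynomial (Fin n) K} (hw : w ∈ dualBd K n B Mtx j) :
    dualD K n B Mtx j w = 0 := by
  cases j with
  | zero =>
    have h0 : w = 0 := by simpa [dualBd] using hw
    rw [h0, map_zero]
  | succ j =>
    obtain ⟨u, rfl⟩ := hw
    exact dd_zero hex j u

/-- **Core lemma**: if all the "north-east" Ext spots vanish, then a non-boundary
homogeneous cycle cannot have all components in the maximal ideal. -/
lemma core
    (hM : ∀ i b c, IsHomogZ K n (Mtx i b c) (fun t => dg (i+1) b t - dg i c t))
    (hex : ∀ i, LinearMap.ker (resD K n B Mtx i) = LinearMap.range (resD K n B Mtx (i+1)))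
    (j₀ : ℕ) (ν₀ : Fin n → ℤ)
    (H : ∀ (j : ℕ) (c : Fin n → ℕ), j₀ ≤ j → c ≠ 0 → j - j₀ ≤ ∑ t, c t →
      ∀ w : B j → MvPolynomial (Fin n) K, Hv dg j (nuc ν₀ c) w →
      dualD K n B Mtx j w = 0 → w ∈ dualBd K n B Mtx j)
    (z : B j₀ → MvPolynomial (Fin n) K) (hz : Hv dg j₀ ν₀ z)
    (hcyc : dualD K n B Mtx j₀ z = 0) (hnb : z ∉ dualBd K n B Mtx j₀)
    (hm : ∀ b, z b ∈ Jdl K n n) : False := by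
  have main : ∀ r : ℕ, r ≤ n → ∃ w : B j₀ → MvPolynomial (Fin n) K,
      w ∈ dualBd K n B Mtx j₀ ∧ Hv dg j₀ ν₀ w ∧ ∀ b, (z - w) b ∈ Jdl K n (n - r) := by
    intro r
    induction r with
    | zero =>
      exact fun _ => ⟨0, Submodule.zero_mem _, Hv_zero, fun b => by simpa using hm b⟩
    | succ r IH =>
      intro hr
      obtain ⟨w, hwbd, hwh, hwJ⟩ := IH (Nat.le_of_succ_le hr)
      have hmlt : n - r - 1 < n := by omega
      set t : Fin n := ⟨n - r - 1, hmlt⟩ with htdef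
      have htv : (t : ℕ) = n - r - 1 := rfl
      have hnr : n - r = (n - r - 1) + 1 := by omega
      have hv_h : Hv dg j₀ ν₀ (z - w) := Hv_sub hz hwh
      have hvJ : ∀ b, (z - w) b ∈ Jdl K n ((n - r - 1) + 1) := by
        intro b; rw [← hnr]; exact hwJ b
      obtain ⟨g, q, hsplit, hg, hgJ, hq⟩ := spl_vec t htv hv_h hvJ
      have hvc : dualD K n B Mtx j₀ (z - w) = 0 := by
        rw [map_sub, hcyc, bd_cycle hex hwbd, sub_zero]
      have h0 : dualD K n B Mtx j₀ g
          + (MvPolynomial.X t : MvPolynomial (Fin n) K) • dualD K n B Mtx j₀ q = 0 := by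
        rw [← map_smul, ← map_add, ← hsplit, hvc]
      have hqcyc : ∀ b, dualD K n B Mtx j₀ q b ∈ Jdl K n (n - r - 1) := by
        intro b
        have h1 := congrFun h0 b
        simp only [Pi.add_apply, Pi.smul_apply, smul_eq_mul, Pi.zero_apply] at h1
        have h2 : MvPolynomial.X t * dualD K n B Mtx j₀ q b ∈ Jdl K n (n - r - 1) := by
          rw [eq_neg_of_add_eq_zero_right h1]
          exact Submodule.neg_mem _ (XG_dualD hgJ b)
        exact Jdl_cancel (le_of_eq htv.symm) h2
      set c : Fin n → ℕ := fun s => if s = t then 1 else 0 with hcdef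
      have hcne : c ≠ 0 := by
        intro h0'
        have := congrFun h0' t
        simp [hcdef] at this
      have hcsum : j₀ - j₀ ≤ ∑ s, c s := by omega
      have hqh : Hv dg j₀ (nuc ν₀ c) q := by
        refine Hv_ext (fun s => ?_) hq
        simp only [nuc, hcdef]
        split_ifs <;> push_cast <;> ring
      obtain ⟨w₃, ξ₃, hw₃bd, hw₃h, hξ₃J, hq_eq⟩ :=
        Vlem hM hex j₀ ν₀ H (n - r - 1) (by omega) j₀ c le_rfl hcne hcsum q hqh hqcyc
      refine ⟨w + (MvPolynomial.X t : MvPolynomial (Fin n) K) • w₃,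
        Submodule.add_mem _ hwbd (Submodule.smul_mem _ _ hw₃bd), ?_, ?_⟩
      · refine Hv_add hwh (Hv_smulX ?_)
        refine Hv_ext (fun s => ?_) hw₃h
        simp only [nuc, hcdef]
        split_ifs <;> push_cast <;> ring
      · intro b
        have heq : z - (w + (MvPolynomial.X t : MvPolynomial (Fin n) K) • w₃)
            = g + (MvPolynomial.X t : MvPolynomial (Fin n) K) • ξ₃ := by
          have : z - w = g + (MvPolynomial.X t : MvPolynomial (Fin n) K) • q := hsplit
          rw [hq_eq, smul_add] at this
          rw [sub_add_eq_sub_sub, this]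
          abel
        rw [heq]
        simp only [Pi.add_apply, Pi.smul_apply, smul_eq_mul]
        exact Ideal.add_mem _ (hgJ b) (Ideal.mul_mem_left _ _ (hξ₃J b))
  obtain ⟨w, hwbd, -, hwJ⟩ := main n le_rfl
  have : z - w = 0 := by
    funext b
    have := hwJ b
    rw [Nat.sub_self] at this
    exact Jdl_zero this
  have hzw : z = w := by rwa [sub_eq_zero] at this
  exact hnb (hzw ▸ hwbd)

lemma J_succ_split (t : Fin n) {p : MvPolynomial (Fin n) K} (hp : p ∈ Jdl K n (t.val + 1)) :
    ∃ a q : MvPolynomial (Fin n) K, a ∈ Jdl K n t.val ∧ p = a + MvPolynomial.X t * q := by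
  have hsets : {s : Fin n | s.val < t.val + 1} = {s : Fin n | s.val < t.val} ∪ {t} := by
    ext s
    rw [Set.mem_union]
    simp only [Set.mem_setOf_eq, Set.mem_singleton_iff]
    constructor
    · intro h
      rcases Nat.lt_succ_iff_lt_or_eq.mp h with h | h
      · exact Or.inl h
      · exact Or.inr (Fin.ext h)
    · rintro (h | rfl)
      · exact Nat.lt_succ_of_lt h
      · exact Nat.lt_succ_self _
  have hset : (MvPolynomial.X '' {s : Fin n | s.val < t.val + 1} :
      Set (MvPolynomial (Fin n) K))
      = (MvPolynomial.X '' {s : Fin n | s.val < t.val}) ∪ {MvPolynomial.X t} := by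
    rw [hsets, Set.image_union, Set.image_singleton]
  rw [Jdl, hset, Ideal.span_union] at hp
  obtain ⟨a, ha, bb, hbb, rfl⟩ := Submodule.mem_sup.mp hp
  obtain ⟨q, hq⟩ := Ideal.mem_span_singleton'.mp hbb
  exact ⟨a, q, ha, by rw [← hq]; ring⟩

lemma XG_resD {r k : ℕ} {v : B (k+1) → MvPolynomial (Fin n) K}
    (hv : ∀ b, v b ∈ Jdl K n r) (c : B k) :
    resD K n B Mtx k v c ∈ Jdl K n r := by
  rw [resD_apply]
  exact Ideal.sum_mem _ (fun b _ => Ideal.mul_mem_left _ _ (hv b))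

lemma Elem
    (hex : ∀ i, LinearMap.ker (resD K n B Mtx i) = LinearMap.range (resD K n B Mtx (i+1))) :
    ∀ r : ℕ, ∀ k : ℕ, r ≤ k → ∀ v : B (k+1) → MvPolynomial (Fin n) K,
    (∀ c, resD K n B Mtx k v c ∈ Jdl K n r) →
    ∃ (u : B (k+2) → MvPolynomial (Fin n) K) (ξ : B (k+1) → MvPolynomial (Fin n) K),
      (∀ b, ξ b ∈ Jdl K n r) ∧ v = resD K n B Mtx (k+1) u + ξ := by
  intro r
  induction r with
  | zero =>
    intro k _ v hv
    have h0 : resD K n B Mtx k v = 0 := funext fun c => Jdl_zero (hv c)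
    have : v ∈ LinearMap.range (resD K n B Mtx (k+1)) := by
      rw [← hex k]
      exact h0
    obtain ⟨u, rfl⟩ := this
    exact ⟨u, 0, fun b => Ideal.zero_mem _, by simp⟩
  | succ r IH =>
    intro k hk v hv
    by_cases hrn : r < n
    case neg =>
      -- r ≥ n : Jdl (r+1) = Jdl r since all variables have index < n ≤ r
      have : ∀ c, resD K n B Mtx k v c ∈ Jdl K n r := by
        intro c
        rw [memJ]
        intro m hm
        obtain ⟨s, hs, hns⟩ := memJ.mp (hv c) m hm
        exact ⟨s, by omega, hns⟩
      obtain ⟨u, ξ, hξ, heq⟩ := IH k (by omega) v this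
      exact ⟨u, ξ, fun b => Jdl_mono (Nat.le_succ r) (hξ b), heq⟩
    set t : Fin n := ⟨r, hrn⟩ with htdef
    have htv : (t : ℕ) = r := rfl
    obtain ⟨k'', rfl⟩ : ∃ k'', k = k'' + 1 := ⟨k - 1, by omega⟩
    -- split resD k v = a + X t * w
    have hsplit : ∀ c, ∃ aq : MvPolynomial (Fin n) K × MvPolynomial (Fin n) K,
        aq.1 ∈ Jdl K n r ∧ resD K n B Mtx (k''+1) v c
          = aq.1 + MvPolynomial.X t * aq.2 := by
      intro c
      have := hv c
      rw [(by rw [htv] : Jdl K n (r+1) = Jdl K n (t.val + 1))] at this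
      obtain ⟨a, q, ha, heq⟩ := J_succ_split t this
      exact ⟨(a, q), by rwa [htv] at ha, heq⟩
    choose aq haJ haeq using hsplit
    set a : B (k''+1) → MvPolynomial (Fin n) K := fun c => (aq c).1 with hadef
    set w : B (k''+1) → MvPolynomial (Fin n) K := fun c => (aq c).2 with hwdef
    have haeq' : resD K n B Mtx (k''+1) v
        = a + (MvPolynomial.X t : MvPolynomial (Fin n) K) • w := by
      funext c
      simpa using haeq c
    have hdd : resD K n B Mtx k'' (resD K n B Mtx (k''+1) v) = 0 :=
      comp_zero hex k'' v
    have hwcyc : ∀ c, resD K n B Mtx k'' w c ∈ Jdl K n r := by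
      intro c
      have h0 : resD K n B Mtx k'' a
          + (MvPolynomial.X t : MvPolynomial (Fin n) K) • resD K n B Mtx k'' w = 0 := by
        rw [← map_smul, ← map_add, ← haeq', hdd]
      have h1 := congrFun h0 c
      simp only [Pi.add_apply, Pi.smul_apply, smul_eq_mul, Pi.zero_apply] at h1
      have h2 : MvPolynomial.X t * resD K n B Mtx k'' w c ∈ Jdl K n r := by
        rw [eq_neg_of_add_eq_zero_right h1]
        exact Submodule.neg_mem _ (XG_resD haJ c)
      exact Jdl_cancel (le_of_eq htv.symm) h2
    obtain ⟨u', ξ', hξ'J, hw_eq⟩ := IH k'' (by omega) w hwcyc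
    have hv2 : ∀ c, resD K n B Mtx (k''+1)
        (v - (MvPolynomial.X t : MvPolynomial (Fin n) K) • u') c ∈ Jdl K n r := by
      intro c
      have heq2 : resD K n B Mtx (k''+1)
          (v - (MvPolynomial.X t : MvPolynomial (Fin n) K) • u')
          = a + (MvPolynomial.X t : MvPolynomial (Fin n) K) • ξ' := by
        rw [map_sub, map_smul, haeq', hw_eq, smul_add]
        abel
      rw [heq2]
      simp only [Pi.add_apply, Pi.smul_apply, smul_eq_mul]
      exact Ideal.add_mem _ (haJ c) (Ideal.mul_mem_left _ _ (hξ'J c))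
    obtain ⟨u'', ξ'', hξ''J, hfin⟩ := IH (k''+1) (by omega) _ hv2
    refine ⟨u'', ξ'' + (MvPolynomial.X t : MvPolynomial (Fin n) K) • u', ?_, ?_⟩
    · intro b
      simp only [Pi.add_apply, Pi.smul_apply, smul_eq_mul]
      refine Ideal.add_mem _ (Jdl_mono (Nat.le_succ r) (hξ''J b)) ?_
      have := X_mul_mem_J (K := K) t (u' b)
      rwa [htv] at this
    · have : v = (v - (MvPolynomial.X t : MvPolynomial (Fin n) K) • u')
          + (MvPolynomial.X t : MvPolynomial (Fin n) K) • u' := by abel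
      rw [this, hfin]
      abel

lemma constCoeff_of_memJ {p : MvPolynomial (Fin n) K} {r : ℕ} (hp : p ∈ Jdl K n r) :
    MvPolynomial.coeff 0 p = 0 := by
  by_contra hc
  obtain ⟨s, -, hs⟩ := memJ.mp hp 0 (MvPolynomial.mem_support_iff.mpr hc)
  simp at hs

/-- the levels of a minimal resolution are bounded by `n` -/
lemma level_le_n
    (hM0 : ∀ i b c, MvPolynomial.coeff 0 (Mtx i b c) = 0)
    (hex : ∀ i, LinearMap.ker (resD K n B Mtx i) = LinearMap.range (resD K n B Mtx (i+1))) :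
    ∀ j : ℕ, B j → j ≤ n := by
  intro j b
  by_contra hj
  push_neg at hj
  obtain ⟨k, rfl⟩ : ∃ k, j = k + 1 := ⟨j - 1, by omega⟩
  haveI : DecidableEq (B (k+1)) := Classical.decEq _
  set v : B (k+1) → MvPolynomial (Fin n) K := Pi.single b 1 with hvdef
  have hbd : ∀ c, resD K n B Mtx k v c ∈ Jdl K n n := by
    intro c
    rw [memJ]
    intro m hm
    have hres : resD K n B Mtx k v c = Mtx k b c := by
      rw [resD_apply, Finset.sum_eq_single b]
      · simp [hvdef]
      · intro a _ ha
        rw [hvdef, Pi.single_eq_of_ne ha, mul_zero]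
      · intro h; exact absurd (Finset.mem_univ b) h
    rw [hres] at hm
    have hm0 : m ≠ 0 := by
      intro h0
      rw [h0] at hm
      exact (MvPolynomial.mem_support_iff.mp hm) (hM0 k b c)
    obtain ⟨s, hs⟩ := Finsupp.ne_iff.mp hm0
    exact ⟨s, s.isLt, by simpa using hs⟩
  obtain ⟨u, ξ, hξJ, heq⟩ := Elem hex n k (by omega) v hbd
  have h1 := congrFun heq b
  rw [hvdef, Pi.single_eq_same] at h1
  have h2 : MvPolynomial.coeff 0 ((resD K n B Mtx (k+1) u + ξ) b) = 0 := by
    simp only [Pi.add_apply, MvPolynomial.coeff_add]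
    rw [constCoeff_of_memJ (hξJ b), add_zero]
    rw [resD_apply]
    rw [MvPolynomial.coeff_sum]
    refine Finset.sum_eq_zero fun a _ => ?_
    have h3 : MvPolynomial.constantCoeff (Mtx (k+1) a b * u a) = 0 := by
      rw [map_mul, MvPolynomial.constantCoeff_eq, hM0, zero_mul]
    rwa [MvPolynomial.constantCoeff_eq] at h3
  rw [← h1] at h2
  simp at h2

lemma mIdeal_eq_J : mIdeal K n = Jdl K n n := by
  rw [mIdeal, Jdl]
  congr 1
  rw [← Set.image_univ]
  congr 1
  ext s
  simp [Fin.is_lt]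

lemma mem_smul_top_components {j : ℕ} {v : B j → MvPolynomial (Fin n) K}
    (hv : v ∈ mIdeal K n •
      (⊤ : Submodule (MvPolynomial (Fin n) K) (B j → MvPolynomial (Fin n) K))) :
    ∀ b, v b ∈ Jdl K n n := by
  intro b
  have hle : mIdeal K n •
      (⊤ : Submodule (MvPolynomial (Fin n) K) (B j → MvPolynomial (Fin n) K))
      ≤ Submodule.pi Set.univ (fun _ : B j => (Jdl K n n : Submodule (MvPolynomial (Fin n) K)
        (MvPolynomial (Fin n) K))) := by
    rw [Submodule.smul_le]
    intro r hr w _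
    rw [Submodule.mem_pi]
    intro b' _
    simp only [Pi.smul_apply, smul_eq_mul]
    rw [mIdeal_eq_J] at hr
    exact Ideal.mul_mem_right _ _ hr
  have := hle hv
  rw [Submodule.mem_pi] at this
  exact this b (Set.mem_univ b)

/-- a global bound on the total degrees appearing in the (finite) resolution -/
noncomputable def Nmax (B : ℕ → Type) [∀ i, Fintype (B i)]
    (dg : ∀ i, B i → Fin n → ℤ) : ℕ :=
  (Finset.range (n+1)).sup (fun j => (Finset.univ : Finset (B j)).sup
    (fun b => ∑ t, (dg j b t).toNat))

lemma degree_bound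
    (hM0 : ∀ i b c, MvPolynomial.coeff 0 (Mtx i b c) = 0)
    (hex : ∀ i, LinearMap.ker (resD K n B Mtx i) = LinearMap.range (resD K n B Mtx (i+1)))
    {j : ℕ} {ν : Fin n → ℤ} {z : B j → MvPolynomial (Fin n) K}
    (hz : Hv dg j ν z) (hnz : z ≠ 0) :
    (∑ t, ν t) ≤ (Nmax B dg : ℤ) ∧ j ≤ n := by
  have hb : ∃ b, z b ≠ 0 := by
    by_contra hc
    push_neg at hc
    exact hnz (funext hc)
  obtain ⟨b, hbne⟩ := hb
  have hjn : j ≤ n := level_le_n hM0 hex j b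
  have hd := homog_nonneg (hz b) hbne
  constructor
  · have h1 : (∑ t, ν t) ≤ ∑ t, ((dg j b t).toNat : ℤ) := by
      apply Finset.sum_le_sum
      intro t _
      have := hd t
      have := Int.self_le_toNat (dg j b t)
      omega
    have h2 : (∑ t, (dg j b t).toNat) ≤ Nmax B dg := by
      refine le_trans (Finset.le_sup (f := fun b => ∑ t, (dg j b t).toNat)
        (Finset.mem_univ b)) ?_
      exact Finset.le_sup (f := fun j => (Finset.univ : Finset (B j)).sup
        (fun b => ∑ t, (dg j b t).toNat)) (Finset.mem_range.mpr (by omega))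
    calc (∑ t, ν t) ≤ ∑ t, ((dg j b t).toNat : ℤ) := h1
      _ = ((∑ t, (dg j b t).toNat : ℕ) : ℤ) := by push_cast; rfl
      _ ≤ (Nmax B dg : ℤ) := by exact_mod_cast h2
  · exact hjn

lemma P1loop
    (hM : ∀ i b c, IsHomogZ K n (Mtx i b c) (fun t => dg (i+1) b t - dg i c t))
    (hM0 : ∀ i b c, MvPolynomial.coeff 0 (Mtx i b c) = 0)
    (hex : ∀ i, LinearMap.ker (resD K n B Mtx i) = LinearMap.range (resD K n B Mtx (i+1)))
    (i : ℕ) (lam : Fin n → ℤ) :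
    ∀ (M j : ℕ) (ν : Fin n → ℤ), ((Nmax B dg : ℤ) + 1 - ∑ t, ν t).toNat ≤ M →
    i ≤ j → (∀ t, lam t ≤ ν t) → ((j : ℤ) - i ≤ (∑ t, ν t) - ∑ t, lam t) →
    ExtNZ K n B Mtx dg j ν →
    ∃ (kk : ℕ) (μ : Fin n → ℤ) (m : B (i + kk) → MvPolynomial (Fin n) K),
      (∀ t, lam t ≤ μ t) ∧ ((kk : ℤ) ≤ (∑ t, μ t) - ∑ t, lam t) ∧
      (∀ b, IsHomogZ K n (m b) (fun t => dg (i + kk) b t - μ t)) ∧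
      m ∉ mIdeal K n •
        (⊤ : Submodule (MvPolynomial (Fin n) K) (B (i + kk) → MvPolynomial (Fin n) K)) ∧
      dualD K n B Mtx (i + kk) m = 0 ∧
      ExtNZ K n B Mtx dg (i + kk) μ := by
  intro M
  induction M with
  | zero =>
    intro j ν hmeas hij hlam hsum hext
    obtain ⟨z, hzh, hzc, hznb⟩ := hext
    have hznz : z ≠ 0 := fun h0 => hznb (h0 ▸ Submodule.zero_mem _)
    obtain ⟨hS, hjn⟩ := degree_bound hM0 hex hzh hznz
    omega
  | succ M IH =>
    intro j ν hmeas hij hlam hsum hext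
    obtain ⟨z, hzh, hzc, hznb⟩ := hext
    have hznz : z ≠ 0 := fun h0 => hznb (h0 ▸ Submodule.zero_mem _)
    obtain ⟨hS, hjn⟩ := degree_bound hM0 hex hzh hznz
    by_cases hV : ∀ (j' : ℕ) (c : Fin n → ℕ), j ≤ j' → c ≠ 0 → j' - j ≤ ∑ t, c t →
      ∀ w : B j' → MvPolynomial (Fin n) K, Hv dg j' (nuc ν c) w →
      dualD K n B Mtx j' w = 0 → w ∈ dualBd K n B Mtx j'
    · -- the maximal spot: z is a minimal generator
      obtain ⟨kk, rfl⟩ := Nat.exists_eq_add_of_le hij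
      refine ⟨kk, ν, z, hlam, by push_cast at hsum ⊢; omega, hzh, ?_, hzc, ⟨z, hzh, hzc, hznb⟩⟩
      intro hmem
      exact core hM hex (i + kk) ν hV z hzh hzc hznb (mem_smul_top_components hmem)
    · push_neg at hV
      obtain ⟨j', c, hjj', hcne, hsum', w, hwh, hwc, hwnb⟩ := hV
      have hc1 : 1 ≤ ∑ t, c t := by
        rcases Function.ne_iff.mp hcne with ⟨t, ht⟩
        have : c t ≠ 0 := by simpa using ht
        calc 1 ≤ c t := by omega
          _ ≤ ∑ t, c t := Finset.single_le_sum (f := fun t => c t) (fun _ _ => Nat.zero_le _)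
                (Finset.mem_univ t)
      have hsumc : (∑ t, nuc ν c t) = (∑ t, ν t) + ((∑ t, c t : ℕ) : ℤ) := by
        simp only [nuc_apply]
        push_cast
        rw [Finset.sum_add_distrib]
      refine IH j' (nuc ν c) ?_ (le_trans hij hjj') ?_ ?_ ⟨w, hwh, hwc, hwnb⟩
      · rw [hsumc]
        omega
      · intro t
        have := hlam t
        simp only [nuc_apply]
        omega
      · have hj'le : j' ≤ j + ∑ t, c t := by omega
        rw [hsumc]
        have hc2 : ((j' : ℤ)) ≤ (j : ℤ) + ((∑ t, c t : ℕ) : ℤ) := by exact_mod_cast hj'le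
        push_cast at hsum hc2 ⊢
        omega

/-- the antitone (decreasing) sorting permutation -/
def sigmaDesc (μ : Fin n → ℕ) : Equiv.Perm (Fin n) :=
  (Fin.revPerm).trans (Tuple.sort μ)

lemma sigmaDesc_antitone (μ : Fin n → ℕ) : Antitone (μ ∘ sigmaDesc μ) := by
  intro a b hab
  have h1 : Fin.rev b ≤ Fin.rev a := Fin.rev_le_rev.mpr hab
  exact Tuple.monotone_sort μ h1

lemma sigmaDesc_perm (μ : Fin n → ℕ) :
    μ = (μ ∘ sigmaDesc μ) ∘ (sigmaDesc μ).symm := by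
  funext x
  simp

lemma sigmaDesc_sum (μ : Fin n → ℕ) : ∑ t, (μ ∘ sigmaDesc μ) t = ∑ t, μ t :=
  Equiv.sum_comp (sigmaDesc μ) μ

lemma sigmaDesc_dominates {lam μ : Fin n → ℕ} (hlam : Antitone lam)
    (hle : ∀ t, lam t ≤ μ t) : ∀ t, lam t ≤ (μ ∘ sigmaDesc μ) t := by
  intro t
  set ρ := μ ∘ sigmaDesc μ with hρ
  have hρa : Antitone ρ := sigmaDesc_antitone μ
  by_contra hc
  push_neg at hc
  set A : Finset (Fin n) := Finset.univ.filter (fun s => lam t ≤ μ s) with hA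
  set Bf : Finset (Fin n) := Finset.univ.filter (fun u => lam t ≤ ρ u) with hB
  have hcard : Bf.card = A.card := by
    apply Finset.card_bij (fun u _ => sigmaDesc μ u)
    · intro u hu
      rw [hA, Finset.mem_filter]
      rw [hB, Finset.mem_filter] at hu
      exact ⟨Finset.mem_univ _, hu.2⟩
    · intro u _ u' _ h
      exact (sigmaDesc μ).injective h
    · intro s hs
      refine ⟨(sigmaDesc μ).symm s, ?_, by simp⟩
      rw [hB, Finset.mem_filter]
      rw [hA, Finset.mem_filter] at hs
      refine ⟨Finset.mem_univ _, ?_⟩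
      rw [hρ]
      simpa using hs.2
  have hAcard : t.val + 1 ≤ A.card := by
    have hsub : Finset.Iic t ⊆ A := by
      intro s hs
      rw [Finset.mem_Iic] at hs
      rw [hA, Finset.mem_filter]
      exact ⟨Finset.mem_univ _, le_trans (hlam hs) (hle s)⟩
    calc t.val + 1 = (Finset.Iic t).card := (Fin.card_Iic t).symm
      _ ≤ A.card := Finset.card_le_card hsub
  have hBsub : Bf ⊆ Finset.Iio t := by
    intro u hu
    rw [hB, Finset.mem_filter] at hu
    rw [Finset.mem_Iio]
    by_contra hut
    push_neg at hut
    have := hρa hut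
    omega
  have hBcard : Bf.card ≤ t.val := by
    calc Bf.card ≤ (Finset.Iio t).card := Finset.card_le_card hBsub
      _ = t.val := Fin.card_Iio t
  omega

/-- the key vanishing hypothesis for the core lemma, derived from Ext-extremality -/
lemma extremal_H
    (lam : Fin n → ℕ) (i : ℕ) (hlam : Antitone lam)
    (hvan : ∀ (j : ℕ) (μ : Fin n → ℕ), i ≤ j → Antitone μ → (∀ t, lam t ≤ μ t) → lam ≠ μ →
      ((∑ t, (lam t : ℤ)) - i ≤ (∑ t, (μ t : ℤ)) - j) → ¬ ExtSymNZ K n B Mtx dg j μ) :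
    ∀ (j : ℕ) (c : Fin n → ℕ), i ≤ j → c ≠ 0 → j - i ≤ ∑ t, c t →
      ∀ w : B j → MvPolynomial (Fin n) K, Hv dg j (nuc (fun t => (lam t : ℤ)) c) w →
      dualD K n B Mtx j w = 0 → w ∈ dualBd K n B Mtx j := by
  intro j c hij hcne hsum w hwh hwc
  by_contra hwnb
  set μN : Fin n → ℕ := fun t => lam t + c t with hμN
  set ρ : Fin n → ℕ := μN ∘ sigmaDesc μN with hρ
  have hc1 : 1 ≤ ∑ t, c t := by
    rcases Function.ne_iff.mp hcne with ⟨t, ht⟩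
    have h1 : c t ≠ 0 := by simpa using ht
    calc 1 ≤ c t := by omega
      _ ≤ ∑ t, c t := Finset.single_le_sum (f := fun t => c t) (fun _ _ => Nat.zero_le _)
            (Finset.mem_univ t)
  have hsumμ : ∑ t, μN t = (∑ t, lam t) + ∑ t, c t := by
    rw [hμN, Finset.sum_add_distrib]
  have hsymnz : ExtSymNZ K n B Mtx dg j ρ := by
    refine ⟨μN, ⟨(sigmaDesc μN).symm, sigmaDesc_perm μN⟩, ?_⟩
    have hfn : (fun t => ((μN t : ℕ) : ℤ)) = nuc (fun t => (lam t : ℤ)) c := by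
      funext t
      simp only [hμN, nuc_apply]
      push_cast
      ring
    rw [hfn]
    exact ⟨w, hwh, hwc, hwnb⟩
  have hρsum : ∑ t, ρ t = (∑ t, lam t) + ∑ t, c t := by
    rw [hρ, sigmaDesc_sum, hsumμ]
  refine hvan j ρ hij (sigmaDesc_antitone μN)
    (sigmaDesc_dominates hlam (fun t => by simp [hμN])) ?_ ?_ hsymnz
  · intro heq
    have h1 : ∑ t, lam t = ∑ t, ρ t := by rw [← heq]
    omega
  · have h1 : (∑ t, ((ρ t : ℕ) : ℤ)) = ((∑ t, ρ t : ℕ) : ℤ) := by push_cast; rfl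
    have h2 : (∑ t, ((lam t : ℕ) : ℤ)) = ((∑ t, lam t : ℕ) : ℤ) := by push_cast; rfl
    rw [h1, h2, hρsum]
    have : (j : ℤ) ≤ (i : ℤ) + ((∑ t, c t : ℕ) : ℤ) := by
      have : j ≤ i + ∑ t, c t := by omega
      exact_mod_cast this
    push_cast at this ⊢
    omega

lemma part2
    (hM : ∀ i b c, IsHomogZ K n (Mtx i b c) (fun t => dg (i+1) b t - dg i c t))
    (hex : ∀ i, LinearMap.ker (resD K n B Mtx i) = LinearMap.range (resD K n B Mtx (i+1)))
    (i : ℕ) (lam : Fin n → ℕ) (hlam : Antitone lam)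
    (hvan : ∀ (j : ℕ) (μ : Fin n → ℕ), i ≤ j → Antitone μ → (∀ t, lam t ≤ μ t) → lam ≠ μ →
      ((∑ t, (lam t : ℤ)) - i ≤ (∑ t, (μ t : ℤ)) - j) → ¬ ExtSymNZ K n B Mtx dg j μ)
    (z : B i → MvPolynomial (Fin n) K)
    (hzh : ∀ b, IsHomogZ K n (z b) (fun t => dg i b t - (lam t : ℤ)))
    (hzc : dualD K n B Mtx i z = 0) (hznb : z ∉ dualBd K n B Mtx i) :
    z ∉ mIdeal K n •
      (⊤ : Submodule (MvPolynomial (Fin n) K) (B i → MvPolynomial (Fin n) K)) := by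
  intro hmem
  exact core hM hex i (fun t => (lam t : ℤ)) (extremal_H lam i hlam hvan) z hzh hzc hznb
    (mem_smul_top_components hmem)

end St16

/-- Let `I ⊆ R` be a monomial ideal, `F_•` a minimal `ℤ^n`-graded free
resolution of `R/I` and `F_•^∨` its dual with differentials `∂^i : F_i^∨ → F_{i+1}^∨`.
If `Ext^i(R/I,R)_{-λ} ≠ 0` for some `λ ∈ ℤ^n`, then there exist `k ≥ 0`, `μ ≥ λ` with
`|μ| - |λ| ≥ k`, and a minimal generator `m` of `F_{i+k}^∨` of degree `-μ` with
`∂^{i+k}(m) = 0`; in particular `Ext^{i+k}(R/I,R)_{-μ} ≠ 0`.  Moreover, if `I` is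
`S_n`-invariant, `λ ∈ P_n` and `(i, λ)` is Ext-extremal, then every nonzero class in
`Ext^i(R/I,R)_{-λ}` is represented by a cycle which is a minimal generator of `F_i^∨`. -/
theorem statement_16 (K : Type) [Field K] (n : ℕ)
    (I : Ideal (MvPolynomial (Fin n) K)) (hmon : IsMonomialIdeal K n I)
    (B : ℕ → Type) [∀ i, Fintype (B i)]
    (Mtx : ∀ i, B (i + 1) → B i → MvPolynomial (Fin n) K)
    (dg : ∀ i, B i → Fin n → ℤ) (aug : B 0 → MvPolynomial (Fin n) K)
    (hres : IsMinimalFreeResolution K n B Mtx I dg aug) :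
    (∀ (i : ℕ) (lam : Fin n → ℤ), ExtNZ K n B Mtx dg i lam →
      ∃ (kk : ℕ) (μ : Fin n → ℤ) (m : B (i + kk) → MvPolynomial (Fin n) K),
        (∀ j, lam j ≤ μ j) ∧ ((kk : ℤ) ≤ (∑ j, μ j) - ∑ j, lam j) ∧
        (∀ b, IsHomogZ K n (m b) (fun j => dg (i + kk) b j - μ j)) ∧
        m ∉ mIdeal K n •
          (⊤ : Submodule (MvPolynomial (Fin n) K) (B (i + kk) → MvPolynomial (Fin n) K)) ∧
        dualD K n B Mtx (i + kk) m = 0 ∧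
        ExtNZ K n B Mtx dg (i + kk) μ) ∧
    (IsSymmetricIdeal K n I →
      ∀ (i : ℕ) (lam : Fin n → ℕ), IsExtExtremalPair K n B Mtx dg i lam →
        ∀ z : B i → MvPolynomial (Fin n) K,
          (∀ b, IsHomogZ K n (z b) (fun j => dg i b j - (lam j : ℤ))) →
          dualD K n B Mtx i z = 0 → z ∉ dualBd K n B Mtx i →
          ∃ m : B i → MvPolynomial (Fin n) K,
            (∀ b, IsHomogZ K n (m b) (fun j => dg i b j - (lam j : ℤ))) ∧
            dualD K n B Mtx i m = 0 ∧
            m ∉ mIdeal K n •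
              (⊤ : Submodule (MvPolynomial (Fin n) K) (B i → MvPolynomial (Fin n) K)) ∧
            z - m ∈ dualBd K n B Mtx i) := by
  obtain ⟨hM, -, hM0, -, -, hex⟩ := hres
  constructor
  · intro i lam hext
    exact St16.P1loop hM hM0 hex i lam
      (((St16.Nmax B dg : ℤ) + 1 - ∑ t, lam t).toNat) i lam le_rfl le_rfl
      (fun t => le_rfl) (by simp) hext
  · intro _ i lam hpair z hzh hzc hznb
    obtain ⟨-, -, hlam, -, hvan⟩ := hpair
    refine ⟨z, hzh, hzc, ?_, by rw [sub_self]; exact Submodule.zero_mem _⟩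
    exact St16.part2 hM hex i lam hlam hvan z hzh hzc hznb
end
end
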